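/- arXiv:2501.17542 — 7 statements merged into one kernel-verified Lean document; each statement's English description precedes it below -/
import Mathlib

section
/- Let ψ : ℝⁿ → ℝ be convex and differentiable, let f : ℝⁿ → ℝ ∪ {+∞} be proper and convex, let γ > 0 and y ∈ ℝⁿ. If x₊ is a minimizer over ℝⁿ of the function u ↦ f(u) + (1/γ)·D_ψ(u, y), then for every x ∈ ℝⁿ one has f(x₊) + (1/γ)·D_ψ(x₊, y) + (1/γ)·D_ψ(x, x₊) ≤ f(x) + (1/γ)·D_ψ(x, y). -/
open scoped RealInnerProductSpace

/-- Bregman divergence of `φ` with gradient map `φ'`: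
`D_φ(x, y) = φ(x) − φ(y) − ⟨∇φ(y), x − y⟩`. -/
noncomputable def breg {n : ℕ} (φ : EuclideanSpace ℝ (Fin n) → ℝ)
    (φ' : EuclideanSpace ℝ (Fin n) → EuclideanSpace ℝ (Fin n))
    (x y : EuclideanSpace ℝ (Fin n)) : ℝ :=
  φ x - φ y - ⟪φ' y, x - y⟫

/-- the three-point descent property of the Bregman proximal map. -/
theorem stmt0 {n : ℕ}
    (ψ : EuclideanSpace ℝ (Fin n) → ℝ)
    (ψ' : EuclideanSpace ℝ (Fin n) → EuclideanSpace ℝ (Fin n))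
    (f : EuclideanSpace ℝ (Fin n) → EReal)
    (hψconv : ConvexOn ℝ Set.univ ψ)
    (hψgrad : ∀ u, HasGradientAt ψ (ψ' u) u)
    (hfproper : ∃ u, f u ≠ ⊤) (hfnobot : ∀ u, f u ≠ ⊥)
    (hfconv : ∀ u v : EuclideanSpace ℝ (Fin n), ∀ t : ℝ, 0 ≤ t → t ≤ 1 →
      f (t • u + (1 - t) • v) ≤ (t : EReal) * f u + ((1 - t : ℝ) : EReal) * f v)
    (γ : ℝ) (hγ : 0 < γ) (y xp : EuclideanSpace ℝ (Fin n))
    (hmin : ∀ u, f xp + ((1 / γ * breg ψ ψ' xp y : ℝ) : EReal)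
        ≤ f u + ((1 / γ * breg ψ ψ' u y : ℝ) : EReal)) :
    ∀ x, f xp + ((1 / γ * breg ψ ψ' xp y : ℝ) : EReal)
        + ((1 / γ * breg ψ ψ' x xp : ℝ) : EReal)
      ≤ f x + ((1 / γ * breg ψ ψ' x y : ℝ) : EReal) := by
  intro x
  obtain ⟨u0, hu0⟩ := hfproper
  have hxp_ne_top : f xp ≠ ⊤ := by
    intro h
    have h2 := hmin u0
    rw [h, EReal.top_add_of_ne_bot (EReal.coe_ne_bot _)] at h2
    exact ((EReal.add_lt_top hu0 (EReal.coe_ne_top _)).ne) (top_le_iff.mp h2)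
  have ha : f xp = ((f xp).toReal : EReal) := (EReal.coe_toReal hxp_ne_top (hfnobot xp)).symm
  set a : ℝ := (f xp).toReal with ha'
  by_cases hx_top : f x = ⊤
  · rw [hx_top, EReal.top_add_of_ne_bot (EReal.coe_ne_bot _)]
    exact le_top
  have hb : f x = (((f x).toReal : ℝ) : EReal) := (EReal.coe_toReal hx_top (hfnobot x)).symm
  set b : ℝ := (f x).toReal with hb'
  set v : EuclideanSpace ℝ (Fin n) := x - xp with hv
  -- Step 1
  have key : ∀ t : ℝ, 0 < t → t ≤ 1 →
      t * (a - b) ≤ 1/γ * (ψ (xp + t • v) - ψ xp - t * ⟪ψ' y, v⟫) := by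
    intro t ht0 ht1
    have hxt : t • x + (1 - t) • xp = xp + t • v := by rw [hv]; module
    have h1 := hmin (t • x + (1 - t) • xp)
    have h2 := hfconv x xp t ht0.le ht1
    rw [ha, hb] at h2
    have h2' : f (t • x + (1 - t) • xp) ≤ ((t * b + (1 - t) * a : ℝ) : EReal) := by
      refine h2.trans_eq ?_; norm_cast
    have h3 : ((a : EReal)) + ((1 / γ * breg ψ ψ' xp y : ℝ) : EReal)
        ≤ ((t * b + (1 - t) * a : ℝ) : EReal)
          + ((1 / γ * breg ψ ψ' (t • x + (1 - t) • xp) y : ℝ) : EReal) := by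
      calc ((a : EReal)) + ((1 / γ * breg ψ ψ' xp y : ℝ) : EReal)
          = f xp + ((1 / γ * breg ψ ψ' xp y : ℝ) : EReal) := by rw [← ha]
        _ ≤ f (t • x + (1 - t) • xp)
            + ((1 / γ * breg ψ ψ' (t • x + (1 - t) • xp) y : ℝ) : EReal) := h1
        _ ≤ _ := add_le_add h2' le_rfl
    rw [← EReal.coe_add, ← EReal.coe_add, EReal.coe_le_coe_iff, hxt] at h3
    have hbreg : breg ψ ψ' (xp + t • v) y - breg ψ ψ' xp y
        = ψ (xp + t • v) - ψ xp - t * ⟪ψ' y, v⟫ := by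
      simp only [breg]
      rw [show ⟪ψ' y, xp + t • v - y⟫ = ⟪ψ' y, xp - y⟫ + ⟪ψ' y, t • v⟫ by
        rw [← inner_add_right]; congr 1; module]
      rw [real_inner_smul_right]; ring
    rw [← hbreg, mul_sub]
    linarith [h3]
  -- Step 2: derivative at 0
  have hline : HasDerivAt (fun t : ℝ => xp + t • v) v 0 := by
    simpa using ((hasDerivAt_id (0:ℝ)).smul_const v).const_add xp
  have hg : HasDerivAt (fun t : ℝ => ψ (xp + t • v)) ⟪ψ' xp, v⟫ 0 := by
    have hF' : HasFDerivAt ψ (InnerProductSpace.toDual ℝ _ (ψ' xp)) (xp + (0:ℝ) • v) := by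
      simpa using (hψgrad xp).hasFDerivAt
    have := hF'.comp_hasDerivAt 0 hline
    simpa [InnerProductSpace.toDual_apply_apply, Function.comp_def] using this
  -- Step 3: limit
  have hslope := hasDerivAt_iff_tendsto_slope.mp hg
  have hslope' : Filter.Tendsto
      (fun t : ℝ => 1/γ * (slope (fun t : ℝ => ψ (xp + t • v)) 0 t - ⟪ψ' y, v⟫))
      (nhdsWithin 0 (Set.Ioi 0)) (nhds (1/γ * (⟪ψ' xp, v⟫ - ⟪ψ' y, v⟫))) :=
    (((hslope.mono_left (nhdsWithin_mono _ (fun t ht => ne_of_gt ht))).sub_const _).const_mul _)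
  have hA : a - b ≤ 1/γ * (⟪ψ' xp, v⟫ - ⟪ψ' y, v⟫) := by
    refine ge_of_tendsto hslope' ?_
    filter_upwards [Ioc_mem_nhdsGT_of_mem (Set.mem_Ico.mpr ⟨le_refl 0, one_pos⟩)] with t ht
    obtain ⟨ht0, ht1⟩ := ht
    have hk := key t ht0 ht1
    have hs : slope (fun t : ℝ => ψ (xp + t • v)) 0 t = (ψ (xp + t • v) - ψ xp) / t := by
      simp [slope, div_eq_inv_mul]
    rw [hs]
    rw [← mul_le_mul_iff_of_pos_left ht0]
    have hrw : t * (1/γ * ((ψ (xp + t • v) - ψ xp) / t - ⟪ψ' y, v⟫))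
        = 1/γ * (ψ (xp + t • v) - ψ xp - t * ⟪ψ' y, v⟫) := by
      field_simp
    rw [hrw]; exact hk
  -- Step 4: three-point identity and conclusion
  have hident : breg ψ ψ' xp y + breg ψ ψ' x xp - breg ψ ψ' x y
      = ⟪ψ' y, v⟫ - ⟪ψ' xp, v⟫ := by
    simp only [breg, hv, inner_sub_right]
    ring
  have h5 : 1/γ * breg ψ ψ' xp y + 1/γ * breg ψ ψ' x xp - 1/γ * breg ψ ψ' x y
      = -(1/γ * (⟪ψ' xp, v⟫ - ⟪ψ' y, v⟫)) := by
    linear_combination (1/γ) * hident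
  rw [ha, hb, ← EReal.coe_add, ← EReal.coe_add, ← EReal.coe_add, EReal.coe_le_coe_iff]
  linarith [hA, h5]
end

section
/- Let ψ : ℝⁿ → ℝ be convex and differentiable, let F : ℝⁿ → ℝ be differentiable and L-smooth adaptable relative to ψ for some L > 0, let G : ℝⁿ → ℝ ∪ {+∞} be proper, lower semicontinuous and convex, and set Φ := F + G. Let γ ∈ (0, 1/L], y ∈ ℝⁿ, and let x₊ be a minimizer over ℝⁿ of u ↦ ⟨∇F(y), u⟩ + G(u) + (1/γ)·D_ψ(u, y). Then for every x ∈ ℝⁿ: Φ(x₊) ≤ Φ(x) + (1/γ + L)·D_ψ(x, y) − (1/γ)·D_ψ(x, x₊) − (1/γ − L)·D_ψ(x₊, y). -/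
open scoped RealInnerProductSpace

section helpers

variable {E : Type*} [NormedAddCommGroup E] [InnerProductSpace ℝ E] [CompleteSpace E]

lemma lineDeriv_of_grad {f : E → ℝ} {fp p : E} (hf : HasGradientAt f fp p) (v : E) :
    HasDerivAt (fun t : ℝ => f (p + t • v)) ⟪fp, v⟫ 0 := by
  have hline : HasDerivAt (fun t : ℝ => p + t • v) v 0 := by
    simpa using ((hasDerivAt_id (0 : ℝ)).smul_const v).const_add p
  have hF : HasFDerivAt f (InnerProductSpace.toDual ℝ E fp) ((fun t : ℝ => p + t • v) 0) := by
    simpa using (hasGradientAt_iff_hasFDerivAt.mp hf)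
  exact (by simpa [InnerProductSpace.toDual_apply_apply] using hF.comp_hasDerivAt 0 hline :)

lemma deriv_le_of_slope {g : ℝ → ℝ} {d c : ℝ} (hg : HasDerivAt g d 0)
    (h : ∀ t ∈ Set.Ioc (0 : ℝ) 1, (g t - g 0) / t ≤ c) : d ≤ c := by
  rw [hasDerivAt_iff_tendsto_slope] at hg
  have hsub : Set.Ioi (0 : ℝ) ⊆ {(0 : ℝ)}ᶜ := fun t ht => ne_of_gt ht
  have hg' := hg.mono_left (nhdsWithin_mono 0 hsub)
  refine le_of_tendsto hg' ?_
  filter_upwards [Ioc_mem_nhdsGT_of_mem (by norm_num : (0:ℝ) ∈ Set.Ico (0:ℝ) 1)] with t ht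
  have := h t ht
  rw [slope_def_field]
  rw [sub_zero]
  exact this

lemma le_deriv_of_slope {g : ℝ → ℝ} {d c : ℝ} (hg : HasDerivAt g d 0)
    (h : ∀ t ∈ Set.Ioc (0 : ℝ) 1, c ≤ (g t - g 0) / t) : c ≤ d := by
  rw [hasDerivAt_iff_tendsto_slope] at hg
  have hsub : Set.Ioi (0 : ℝ) ⊆ {(0 : ℝ)}ᶜ := fun t ht => ne_of_gt ht
  have hg' := hg.mono_left (nhdsWithin_mono 0 hsub)
  refine ge_of_tendsto hg' ?_
  filter_upwards [Ioc_mem_nhdsGT_of_mem (by norm_num : (0:ℝ) ∈ Set.Ico (0:ℝ) 1)] with t ht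
  have := h t ht
  rw [slope_def_field]
  rw [sub_zero]
  exact this

/-- convex gradient-type inequality along a line. -/
lemma convex_line_ge {f : E → ℝ} (hf : ConvexOn ℝ Set.univ f) (p v : E) {d : ℝ}
    (hd : HasDerivAt (fun t : ℝ => f (p + t • v)) d 0) : d ≤ f (p + v) - f p := by
  apply deriv_le_of_slope hd
  intro t ht
  have h2 := hf.2 (Set.mem_univ (p + v)) (Set.mem_univ p) ht.1.le
    (by linarith [ht.2] : (0:ℝ) ≤ 1 - t) (by ring)
  have hpt : t • (p + v) + (1 - t) • p = p + t • v := by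
    rw [smul_add, sub_smul, one_smul]; abel
  rw [hpt, smul_eq_mul, smul_eq_mul] at h2
  rw [div_le_iff₀ ht.1]
  simp only [zero_smul, add_zero]
  nlinarith [h2]

end helpers

/-- the Bregman proximal-gradient descent inequality. -/
theorem stmt1 {n : ℕ} (L : ℝ) (hL : 0 < L)
    (ψ F : EuclideanSpace ℝ (Fin n) → ℝ)
    (ψ' F' : EuclideanSpace ℝ (Fin n) → EuclideanSpace ℝ (Fin n))
    (G : EuclideanSpace ℝ (Fin n) → EReal)
    (hψconv : ConvexOn ℝ Set.univ ψ)
    (hψgrad : ∀ u, HasGradientAt ψ (ψ' u) u)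
    (hFgrad : ∀ u, HasGradientAt F (F' u) u)
    (hsmad₁ : ConvexOn ℝ Set.univ (fun u => L * ψ u - F u))
    (hsmad₂ : ConvexOn ℝ Set.univ (fun u => L * ψ u + F u))
    (hGproper : ∃ u, G u ≠ ⊤) (hGnobot : ∀ u, G u ≠ ⊥)
    (hGlsc : LowerSemicontinuous G)
    (hGconv : ∀ u v : EuclideanSpace ℝ (Fin n), ∀ t : ℝ, 0 ≤ t → t ≤ 1 →
      G (t • u + (1 - t) • v) ≤ (t : EReal) * G u + ((1 - t : ℝ) : EReal) * G v)
    (γ : ℝ) (hγ0 : 0 < γ) (hγL : γ ≤ 1 / L)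
    (y xp : EuclideanSpace ℝ (Fin n))
    (hmin : ∀ u, ((⟪F' y, xp⟫ : ℝ) : EReal) + G xp
          + ((1 / γ * breg ψ ψ' xp y : ℝ) : EReal)
        ≤ ((⟪F' y, u⟫ : ℝ) : EReal) + G u + ((1 / γ * breg ψ ψ' u y : ℝ) : EReal)) :
    ∀ x, (F xp : EReal) + G xp
      ≤ (F x : EReal) + G x
        + (((1 / γ + L) * breg ψ ψ' x y - 1 / γ * breg ψ ψ' x xp
            - (1 / γ - L) * breg ψ ψ' xp y : ℝ) : EReal) := by
  -- G xp is finite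
  obtain ⟨u₀, hu₀⟩ := hGproper
  have hGu₀ : G u₀ = ((G u₀).toReal : EReal) := (EReal.coe_toReal hu₀ (hGnobot u₀)).symm
  have hxp_ne_top : G xp ≠ ⊤ := by
    intro htop
    have h := hmin u₀
    rw [htop, hGu₀, EReal.coe_add_top, EReal.top_add_coe, ← EReal.coe_add, ← EReal.coe_add,
      top_le_iff] at h
    exact (EReal.coe_ne_top _) h
  set gxp : ℝ := (G xp).toReal with hgxp_def
  have hgxp : G xp = (gxp : EReal) := (EReal.coe_toReal hxp_ne_top (hGnobot xp)).symm
  intro x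
  by_cases hx : G x = ⊤
  · rw [hx, EReal.coe_add_top, EReal.top_add_coe]
    exact le_top
  set gx : ℝ := (G x).toReal with hgx_def
  have hgx : G x = (gx : EReal) := (EReal.coe_toReal hx (hGnobot x)).symm
  -- real goal after coercion
  rw [hgxp, hgx, ← EReal.coe_add, ← EReal.coe_add, ← EReal.coe_add, EReal.coe_le_coe_iff]
  set v : EuclideanSpace ℝ (Fin n) := x - xp with hv
  -- (i) descent lemma for F at (xp, y)
  have hi : F xp - F y - ⟪F' y, xp - y⟫ ≤ L * breg ψ ψ' xp y := by
    have hd : HasDerivAt (fun t : ℝ => L * ψ (y + t • (xp - y)) - F (y + t • (xp - y)))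
        (L * ⟪ψ' y, xp - y⟫ - ⟪F' y, xp - y⟫) 0 :=
      ((lineDeriv_of_grad (hψgrad y) (xp - y)).const_mul L).sub
        (lineDeriv_of_grad (hFgrad y) (xp - y))
    have := convex_line_ge hsmad₁ y (xp - y) hd
    rw [add_sub_cancel] at this
    simp only [breg]
    linarith
  -- (ii) lower descent lemma for F at (x, y)
  have hii : -(L * breg ψ ψ' x y) ≤ F x - F y - ⟪F' y, x - y⟫ := by
    have hd : HasDerivAt (fun t : ℝ => L * ψ (y + t • (x - y)) + F (y + t • (x - y)))
        (L * ⟪ψ' y, x - y⟫ + ⟪F' y, x - y⟫) 0 :=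
      ((lineDeriv_of_grad (hψgrad y) (x - y)).const_mul L).add
        (lineDeriv_of_grad (hFgrad y) (x - y))
    have := convex_line_ge hsmad₂ y (x - y) hd
    rw [add_sub_cancel] at this
    simp only [breg]
    linarith
  -- (iii) optimality inequality
  have hstar : 0 ≤ ⟪F' y, v⟫ + gx - gxp
      + 1 / γ * ⟪ψ' xp, v⟫ - 1 / γ * ⟪ψ' y, v⟫ := by
    set c : ℝ := ⟪F' y, v⟫ + gx - gxp - 1 / γ * ⟪ψ' y, v⟫ with hc
    have hd : HasDerivAt (fun t : ℝ => ψ (xp + t • v)) ⟪ψ' xp, v⟫ 0 :=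
      lineDeriv_of_grad (hψgrad xp) v
    have key : ∀ t ∈ Set.Ioc (0 : ℝ) 1,
        -γ * c ≤ ((fun t : ℝ => ψ (xp + t • v)) t - (fun t : ℝ => ψ (xp + t • v)) 0) / t := by
      intro t ht
      simp only [zero_smul, add_zero]
      set ut : EuclideanSpace ℝ (Fin n) := xp + t • v with hut
      have hut2 : ut = t • x + (1 - t) • xp := by
        rw [hut, hv, smul_sub, sub_smul, one_smul]; abel
      -- G at ut bounded
      have hGut : G ut ≤ ((t * gx + (1 - t) * gxp : ℝ) : EReal) := by
        rw [EReal.coe_add, EReal.coe_mul, EReal.coe_mul, hut2, ← hgx, ← hgxp]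
        exact hGconv x xp t ht.1.le ht.2
      have hm := hmin ut
      have hm2 : ((⟪F' y, xp⟫ : ℝ) : EReal) + (gxp : EReal)
            + ((1 / γ * breg ψ ψ' xp y : ℝ) : EReal)
          ≤ ((⟪F' y, ut⟫ : ℝ) : EReal) + ((t * gx + (1 - t) * gxp : ℝ) : EReal)
            + ((1 / γ * breg ψ ψ' ut y : ℝ) : EReal) := by
        rw [← hgxp]
        calc _ ≤ ((⟪F' y, ut⟫ : ℝ) : EReal) + G ut + ((1 / γ * breg ψ ψ' ut y : ℝ) : EReal) :=
              hm
          _ ≤ _ := by gcongr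
      rw [← EReal.coe_add, ← EReal.coe_add, ← EReal.coe_add, ← EReal.coe_add,
        EReal.coe_le_coe_iff] at hm2
      -- rewrite inner products
      have hinn : ⟪F' y, ut⟫ = ⟪F' y, xp⟫ + t * ⟪F' y, v⟫ := by
        rw [hut, inner_add_right, real_inner_smul_right]
      have hsubr : (⟪ψ' y, ut - y⟫ : ℝ) = ⟪ψ' y, xp - y⟫ + t * ⟪ψ' y, v⟫ := by
        have : ut - y = (xp - y) + t • v := by rw [hut]; abel
        rw [this, inner_add_right, real_inner_smul_right]
      have hbdiff : 1 / γ * breg ψ ψ' ut y - 1 / γ * breg ψ ψ' xp y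
          = 1 / γ * (ψ ut - ψ xp) - t / γ * ⟪ψ' y, v⟫ := by
        simp only [breg]
        rw [hsubr]
        ring
      have hRt : 0 ≤ t * ⟪F' y, v⟫ + t * (gx - gxp)
          + 1 / γ * (ψ ut - ψ xp) - t / γ * ⟪ψ' y, v⟫ := by
        rw [hinn] at hm2
        linarith [hbdiff, hm2]
      rw [le_div_iff₀ ht.1]
      have hRt2 : 0 ≤ γ * t * ⟪F' y, v⟫ + γ * t * (gx - gxp)
          + (ψ ut - ψ xp) - t * ⟪ψ' y, v⟫ := by
        have h := mul_le_mul_of_nonneg_left hRt hγ0.le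
        have e : γ * (t * ⟪F' y, v⟫ + t * (gx - gxp)
            + 1 / γ * (ψ ut - ψ xp) - t / γ * ⟪ψ' y, v⟫)
            = γ * t * ⟪F' y, v⟫ + γ * t * (gx - gxp) + (ψ ut - ψ xp) - t * ⟪ψ' y, v⟫ := by
          field_simp
        rw [mul_zero, e] at h
        exact h
      have e2 : -γ * c * t = -(γ * t * ⟪F' y, v⟫) - γ * t * (gx - gxp) + t * ⟪ψ' y, v⟫ := by
        rw [hc]
        field_simp
        ring
      linarith
    have hlim := le_deriv_of_slope hd key
    have h5 : 1 / γ * (-γ * c) = -c := by field_simp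
    have h6 := mul_le_mul_of_nonneg_left hlim (by positivity : (0:ℝ) ≤ 1 / γ)
    rw [h5] at h6
    rw [hc] at h6
    linarith
  -- three-point identity
  have h3pt : breg ψ ψ' x y - breg ψ ψ' x xp - breg ψ ψ' xp y = ⟪ψ' xp, v⟫ - ⟪ψ' y, v⟫ := by
    simp only [breg, hv]
    have e1 : (x : EuclideanSpace ℝ (Fin n)) - y = (x - xp) + (xp - y) := by abel
    rw [e1, inner_add_right]
    ring
  have h3pt' : 1 / γ * breg ψ ψ' x y - 1 / γ * breg ψ ψ' x xp - 1 / γ * breg ψ ψ' xp y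
      = 1 / γ * ⟪ψ' xp, v⟫ - 1 / γ * ⟪ψ' y, v⟫ := by
    rw [← mul_sub, ← mul_sub, h3pt, mul_sub]
  -- inner split
  have hsplit : (⟪F' y, x - y⟫ : ℝ) = ⟪F' y, v⟫ + ⟪F' y, xp - y⟫ := by
    have e1 : (x : EuclideanSpace ℝ (Fin n)) - y = v + (xp - y) := by rw [hv]; abel
    rw [e1, inner_add_right]
  nlinarith [hi, hii, hstar, h3pt', hsplit]
end

section
/- Let ψ : ℝⁿ → ℝ be convex and differentiable such that D_ψ satisfies the triangle scaling property with exponent κ > 0, let F : ℝⁿ → ℝ be differentiable and L-smooth adaptable relative to ψ for some L > 0, let G : ℝⁿ → ℝ ∪ {+∞} be proper, lower semicontinuous and convex, and set Φ := F + G. Let a, a′ ∈ [0,1], points x⁻, x ∈ ℝⁿ, and define z := x⁻ + a′(x − x⁻) and y := z + a(x − z). Let γ ∈ (0, 1/L] and let x₊ be a minimizer over ℝⁿ of u ↦ ⟨∇F(y), u⟩ + G(u) + (1/γ)·D_ψ(u, y). Then Φ(x₊) + (1/γ)·D_ψ(x, x₊) ≤ Φ(x) + (1/γ + L)·(1 −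 a)^κ (1 − a′)^κ · D_ψ(x, x⁻) − (1/γ − L)·D_ψ(x₊, y). -/
open scoped RealInnerProductSpace

open Filter Topology

variable {n : ℕ}

/-- directional derivative limit -/
lemma dir_deriv (h : EuclideanSpace ℝ (Fin n) → ℝ)
    (hp' : EuclideanSpace ℝ (Fin n)) (p d : EuclideanSpace ℝ (Fin n))
    (hgrad : HasGradientAt h hp' p) :
    Tendsto (fun t : ℝ => (h (p + t • d) - h p) / t) (𝓝[>] (0:ℝ)) (𝓝 ⟪hp', d⟫) := by
  have hc : ∀ t : ℝ, HasDerivAt (fun s : ℝ => p + s • d) d t := by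
    intro t
    simpa using ((hasDerivAt_id t).smul_const d).const_add p
  have hF := hgrad.hasFDerivAt
  have hcomp : HasDerivAt (fun t : ℝ => h (p + t • d)) ⟪hp', d⟫ 0 := by
    have := HasFDerivAt.comp_hasDerivAt (x := (0:ℝ))
      (by simpa using hF : HasFDerivAt h ((InnerProductSpace.toDual ℝ (EuclideanSpace ℝ (Fin n))) hp') (p + (0:ℝ) • d)) (hc 0)
    simpa [Function.comp_def] using this
  have := hasDerivAt_iff_tendsto_slope.mp hcomp
  have h2 : Tendsto (slope (fun t : ℝ => h (p + t • d)) 0) (𝓝[>] (0:ℝ)) (𝓝 ⟪hp', d⟫) :=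
    this.mono_left (nhdsWithin_mono _ (fun t ht => ne_of_gt ht))
  refine h2.congr' ?_
  filter_upwards [self_mem_nhdsWithin] with t ht
  simp [slope, div_eq_inv_mul, mul_comm]

lemma convex_grad_ineq (h : EuclideanSpace ℝ (Fin n) → ℝ)
    (h' : EuclideanSpace ℝ (Fin n) → EuclideanSpace ℝ (Fin n))
    (hconv : ConvexOn ℝ Set.univ h)
    (hgrad : ∀ u, HasGradientAt h (h' u) u)
    (p q : EuclideanSpace ℝ (Fin n)) :
    h p + ⟪h' p, q - p⟫ ≤ h q := by
  have hlim := dir_deriv h (h' p) p (q - p) (hgrad p)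
  have hev : ∀ᶠ t : ℝ in 𝓝[>] (0:ℝ), (h (p + t • (q - p)) - h p) / t ≤ h q - h p := by
    filter_upwards [self_mem_nhdsWithin,
      Ioo_mem_nhdsGT_of_mem (Set.mem_Ico.mpr ⟨le_refl (0:ℝ), one_pos⟩)] with t ht ht1
    have ht0 : (0:ℝ) < t := ht
    have ht1' : t ≤ 1 := le_of_lt ht1.2
    have hco := hconv.2 (Set.mem_univ q) (Set.mem_univ p) (le_of_lt ht0)
      (by linarith : (0:ℝ) ≤ 1 - t) (by ring)
    have heq : t • q + (1 - t) • p = p + t • (q - p) := by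
      rw [smul_sub, sub_smul, one_smul]; abel
    rw [heq] at hco
    simp only [smul_eq_mul] at hco
    rw [div_le_iff₀ ht0]
    nlinarith [hco]
  have := le_of_tendsto hlim hev
  linarith [this]

lemma grad_smul_add (c : ℝ) (f g : EuclideanSpace ℝ (Fin n) → ℝ)
    (f' g' u : EuclideanSpace ℝ (Fin n))
    (hf : HasGradientAt f f' u) (hg : HasGradientAt g g' u) :
    HasGradientAt (fun v => c * f v + g v) (c • f' + g') u := by
  rw [hasGradientAt_iff_hasFDerivAt]
  have h1 := (hf.hasFDerivAt.const_smul c).add hg.hasFDerivAt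
  have h2 : (InnerProductSpace.toDual ℝ (EuclideanSpace ℝ (Fin n))) (c • f' + g')
      = c • (InnerProductSpace.toDual ℝ (EuclideanSpace ℝ (Fin n))) f'
        + (InnerProductSpace.toDual ℝ (EuclideanSpace ℝ (Fin n))) g' := by
    simp [map_add, map_smul]
  rw [h2]
  exact h1

lemma grad_smul_sub (c : ℝ) (f g : EuclideanSpace ℝ (Fin n) → ℝ)
    (f' g' u : EuclideanSpace ℝ (Fin n))
    (hf : HasGradientAt f f' u) (hg : HasGradientAt g g' u) :
    HasGradientAt (fun v => c * f v - g v) (c • f' - g') u := by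
  have := grad_smul_add (n := n) c f (fun v => - g v) f' (-g') u hf ?hg
  · simpa [sub_eq_add_neg] using this
  · rw [hasGradientAt_iff_hasFDerivAt] at hg ⊢
    have := hg.neg
    rw [map_neg]
    exact this

set_option maxHeartbeats 1000000 in
/-- the inertial Bregman proximal-gradient descent inequality under
the triangle scaling property. -/
theorem stmt2 {n : ℕ} (L κ : ℝ) (hL : 0 < L) (hκ : 0 < κ)
    (ψ F : EuclideanSpace ℝ (Fin n) → ℝ)
    (ψ' F' : EuclideanSpace ℝ (Fin n) → EuclideanSpace ℝ (Fin n))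
    (G : EuclideanSpace ℝ (Fin n) → EReal)
    (hψconv : ConvexOn ℝ Set.univ ψ)
    (hψgrad : ∀ u, HasGradientAt ψ (ψ' u) u)
    (hTSP : ∀ u v w : EuclideanSpace ℝ (Fin n), ∀ t : ℝ, 0 ≤ t → t ≤ 1 →
      breg ψ ψ' ((1 - t) • u + t • v) ((1 - t) • u + t • w) ≤ t ^ κ * breg ψ ψ' v w)
    (hFgrad : ∀ u, HasGradientAt F (F' u) u)
    (hsmad₁ : ConvexOn ℝ Set.univ (fun u => L * ψ u - F u))
    (hsmad₂ : ConvexOn ℝ Set.univ (fun u => L * ψ u + F u))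
    (hGproper : ∃ u, G u ≠ ⊤) (hGnobot : ∀ u, G u ≠ ⊥)
    (hGlsc : LowerSemicontinuous G)
    (hGconv : ∀ u v : EuclideanSpace ℝ (Fin n), ∀ t : ℝ, 0 ≤ t → t ≤ 1 →
      G (t • u + (1 - t) • v) ≤ (t : EReal) * G u + ((1 - t : ℝ) : EReal) * G v)
    (a a' : ℝ) (ha : a ∈ Set.Icc (0 : ℝ) 1) (ha' : a' ∈ Set.Icc (0 : ℝ) 1)
    (xm x z y : EuclideanSpace ℝ (Fin n))
    (hz : z = xm + a' • (x - xm)) (hy : y = z + a • (x - z))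
    (γ : ℝ) (hγ0 : 0 < γ) (hγL : γ ≤ 1 / L)
    (xp : EuclideanSpace ℝ (Fin n))
    (hmin : ∀ u, ((⟪F' y, xp⟫ : ℝ) : EReal) + G xp
          + ((1 / γ * breg ψ ψ' xp y : ℝ) : EReal)
        ≤ ((⟪F' y, u⟫ : ℝ) : EReal) + G u + ((1 / γ * breg ψ ψ' u y : ℝ) : EReal)) :
    (F xp : EReal) + G xp + ((1 / γ * breg ψ ψ' x xp : ℝ) : EReal)
      ≤ (F x : EReal) + G x
        + (((1 / γ + L) * ((1 - a) ^ κ * (1 - a') ^ κ) * breg ψ ψ' x xm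
            - (1 / γ - L) * breg ψ ψ' xp y : ℝ) : EReal) := by

  classical
  set c : ℝ := 1 / γ with hc
  have hcpos : 0 < c := by positivity
  have hcL : L ≤ c := by
    rw [hc, le_div_iff₀ hγ0]
    calc L * γ ≤ L * (1 / L) := by
          exact mul_le_mul_of_nonneg_left hγL hL.le
      _ = 1 := by field_simp
  -- G xp is finite
  obtain ⟨u₀, hu₀⟩ := hGproper
  have hGxp_ne_top : G xp ≠ ⊤ := by
    intro htop
    have h := hmin u₀
    rw [htop] at h
    have hL1 : ((⟪F' y, xp⟫ : ℝ) : EReal) + ⊤ + ((c * breg ψ ψ' xp y : ℝ) : EReal) = ⊤ := by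
      rw [EReal.coe_add_top]
      rfl
    rw [hL1, top_le_iff] at h
    have hGu₀ : G u₀ = (((G u₀).toReal : ℝ) : EReal) := (EReal.coe_toReal hu₀ (hGnobot u₀)).symm
    rw [hGu₀, ← EReal.coe_add, ← EReal.coe_add] at h
    exact EReal.coe_ne_top _ h
  set gp : ℝ := (G xp).toReal with hgpdef
  have hgp : G xp = (gp : EReal) := (EReal.coe_toReal hGxp_ne_top (hGnobot xp)).symm
  -- trivial case : G x = ⊤
  by_cases hGx_top : G x = ⊤
  · rw [hGx_top]
    have : (F x : EReal) + ⊤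
        + (((1 / γ + L) * ((1 - a) ^ κ * (1 - a') ^ κ) * breg ψ ψ' x xm
            - (1 / γ - L) * breg ψ ψ' xp y : ℝ) : EReal) = ⊤ := by
      rw [EReal.coe_add_top]
      rfl
    rw [this]
    exact le_top
  set gx : ℝ := (G x).toReal with hgxdef
  have hgx : G x = (gx : EReal) := (EReal.coe_toReal hGx_top (hGnobot x)).symm
  -- abbreviations
  set B : ℝ := ⟪F' y, x - xp⟫ with hB
  set Q : ℝ := ⟪ψ' y, x - xp⟫ with hQ
  -- the key inequality for each small t
  have key_t : ∀ t : ℝ, t ∈ Set.Ioo (0 : ℝ) 1 →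
      gp ≤ gx + B + c * ((ψ (xp + t • (x - xp)) - ψ xp) / t - Q) := by
    intro t ht
    obtain ⟨ht0, ht1⟩ := ht
    set ut : EuclideanSpace ℝ (Fin n) := xp + t • (x - xp) with hut
    have hut2 : t • x + (1 - t) • xp = ut := by
      rw [hut, smul_sub, sub_smul, one_smul]; abel
    have hGut : G ut ≤ ((t * gx + (1 - t) * gp : ℝ) : EReal) := by
      have := hGconv x xp t ht0.le ht1.le
      rw [hut2, hgx, hgp] at this
      calc G ut ≤ (t : EReal) * (gx : EReal) + ((1 - t : ℝ) : EReal) * (gp : EReal) := this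
        _ = ((t * gx + (1 - t) * gp : ℝ) : EReal) := by
            rw [← EReal.coe_mul, ← EReal.coe_mul, ← EReal.coe_add]
    have hm := hmin ut
    have hstepE : ((⟪F' y, xp⟫ + gp + c * breg ψ ψ' xp y : ℝ) : EReal)
        ≤ ((⟪F' y, ut⟫ + (t * gx + (1 - t) * gp) + c * breg ψ ψ' ut y : ℝ) : EReal) := by
      calc ((⟪F' y, xp⟫ + gp + c * breg ψ ψ' xp y : ℝ) : EReal)
          = ((⟪F' y, xp⟫ : ℝ) : EReal) + G xp + ((c * breg ψ ψ' xp y : ℝ) : EReal) := by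
            rw [hgp, ← EReal.coe_add, ← EReal.coe_add]
        _ ≤ ((⟪F' y, ut⟫ : ℝ) : EReal) + G ut + ((c * breg ψ ψ' ut y : ℝ) : EReal) := hm
        _ ≤ ((⟪F' y, ut⟫ : ℝ) : EReal) + ((t * gx + (1 - t) * gp : ℝ) : EReal)
              + ((c * breg ψ ψ' ut y : ℝ) : EReal) := by
            gcongr
        _ = ((⟪F' y, ut⟫ + (t * gx + (1 - t) * gp) + c * breg ψ ψ' ut y : ℝ) : EReal) := by
            rw [← EReal.coe_add, ← EReal.coe_add]
    have hstep : ⟪F' y, xp⟫ + gp + c * breg ψ ψ' xp y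
        ≤ ⟪F' y, ut⟫ + (t * gx + (1 - t) * gp) + c * breg ψ ψ' ut y :=
      EReal.coe_le_coe_iff.mp hstepE
    -- expand inner products and breg
    have hinF : ⟪F' y, ut⟫ = ⟪F' y, xp⟫ + t * B := by
      rw [hut, inner_add_right, hB, real_inner_smul_right]
    have hbreg : breg ψ ψ' ut y = ψ ut - ψ y - (⟪ψ' y, xp - y⟫ + t * Q) := by
      rw [breg]
      have : ut - y = (xp - y) + t • (x - xp) := by rw [hut]; abel
      rw [this, inner_add_right, hQ, real_inner_smul_right]
    rw [hinF, hbreg, breg] at hstep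
    have hts : t * ((ψ ut - ψ xp) / t) = ψ ut - ψ xp := mul_div_cancel₀ _ ht0.ne'
    have h4 : t * gp ≤ t * (gx + B + c * ((ψ ut - ψ xp) / t - Q)) := by
      have e5 : t * (gx + B + c * ((ψ ut - ψ xp) / t - Q))
          = t * gx + t * B + c * (ψ ut - ψ xp) - t * (c * Q) := by
        have : t * (gx + B + c * ((ψ ut - ψ xp) / t - Q))
            = t * gx + t * B + c * (t * ((ψ ut - ψ xp) / t)) - t * (c * Q) := by ring
        rw [this, hts]
      have e6 : c * (ψ ut - ψ y - (⟪ψ' y, xp - y⟫ + t * Q))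
          = c * ψ ut - c * ψ y - c * ⟪ψ' y, xp - y⟫ - t * (c * Q) := by ring
      have e7 : c * (ψ xp - ψ y - ⟪ψ' y, xp - y⟫)
          = c * ψ xp - c * ψ y - c * ⟪ψ' y, xp - y⟫ := by ring
      have e8 : c * (ψ ut - ψ xp) = c * ψ ut - c * ψ xp := by ring
      rw [e5]
      linarith [hstep, e6, e7, e8]
    exact le_of_mul_le_mul_left h4 ht0
  -- pass to the limit t → 0+
  have hlim := dir_deriv ψ (ψ' xp) xp (x - xp) (hψgrad xp)
  have hlim2 : Filter.Tendsto
      (fun t : ℝ => gx + B + c * ((ψ (xp + t • (x - xp)) - ψ xp) / t - Q)) (nhdsWithin 0 (Set.Ioi 0))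
      (nhds (gx + B + c * (⟪ψ' xp, x - xp⟫ - Q))) := by
    exact (((hlim.sub_const Q).const_mul c).const_add (gx + B)).congr (fun t => by ring)
  have key : gp ≤ gx + B + c * (⟪ψ' xp, x - xp⟫ - Q) := by
    refine ge_of_tendsto hlim2 ?_
    filter_upwards [Ioo_mem_nhdsGT_of_mem (Set.mem_Ico.mpr ⟨le_refl (0:ℝ), one_pos⟩)] with t ht
    exact key_t t ht
  -- smooth adaptability consequences
  have hF1 : F xp ≤ F y + ⟪F' y, xp - y⟫ + L * breg ψ ψ' xp y := by
    have hg : ∀ u, HasGradientAt (fun v => L * ψ v - F v) (L • ψ' u - F' u) u :=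
      fun u => grad_smul_sub L ψ F (ψ' u) (F' u) u (hψgrad u) (hFgrad u)
    have := convex_grad_ineq (fun v => L * ψ v - F v) (fun u => L • ψ' u - F' u) hsmad₁ hg y xp
    simp only [inner_sub_left, real_inner_smul_left] at this
    rw [breg]
    have e : L * (ψ xp - ψ y - ⟪ψ' y, xp - y⟫)
        = L * ψ xp - L * ψ y - L * ⟪ψ' y, xp - y⟫ := by ring
    linarith [this, e]
  have hF2 : F y + ⟪F' y, x - y⟫ ≤ F x + L * breg ψ ψ' x y := by
    have hg : ∀ u, HasGradientAt (fun v => L * ψ v + F v) (L • ψ' u + F' u) u :=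
      fun u => grad_smul_add L ψ F (ψ' u) (F' u) u (hψgrad u) (hFgrad u)
    have := convex_grad_ineq (fun v => L * ψ v + F v) (fun u => L • ψ' u + F' u) hsmad₂ hg y x
    simp only [inner_add_left, real_inner_smul_left] at this
    rw [breg]
    have e : L * (ψ x - ψ y - ⟪ψ' y, x - y⟫)
        = L * ψ x - L * ψ y - L * ⟪ψ' y, x - y⟫ := by ring
    linarith [this, e]
  -- nonnegativity of Bregman divergences of ψ
  have hbnn : ∀ u v : EuclideanSpace ℝ (Fin n), 0 ≤ breg ψ ψ' u v := by
    intro u v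
    have := convex_grad_ineq ψ ψ' hψconv hψgrad v u
    rw [breg]; linarith
  -- TSP steps
  have hyz : y = a • x + (1 - a) • z := by
    rw [hy, smul_sub, sub_smul, one_smul]; abel
  have hzxm : z = a' • x + (1 - a') • xm := by
    rw [hz, smul_sub, sub_smul, one_smul]; abel
  have hT1 : breg ψ ψ' x y ≤ (1 - a) ^ κ * breg ψ ψ' x z := by
    have := hTSP x x z (1 - a) (by linarith [ha.2]) (by linarith [ha.1])
    have e1 : (1 - (1 - a)) • x + (1 - a) • x = x := by
      rw [← add_smul]; norm_num
    have e2 : (1 - (1 - a)) • x + (1 - a) • z = y := by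
      rw [hyz]; congr 1; congr 1; ring
    rwa [e1, e2] at this
  have hT2 : breg ψ ψ' x z ≤ (1 - a') ^ κ * breg ψ ψ' x xm := by
    have := hTSP x x xm (1 - a') (by linarith [ha'.2]) (by linarith [ha'.1])
    have e1 : (1 - (1 - a')) • x + (1 - a') • x = x := by
      rw [← add_smul]; norm_num
    have e2 : (1 - (1 - a')) • x + (1 - a') • xm = z := by
      rw [hzxm]; congr 1; congr 1; ring
    rwa [e1, e2] at this
  have hanonneg : (0:ℝ) ≤ (1 - a) ^ κ := Real.rpow_nonneg (by linarith [ha.2]) κ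
  have ha'nonneg : (0:ℝ) ≤ (1 - a') ^ κ := Real.rpow_nonneg (by linarith [ha'.2]) κ
  have hT : breg ψ ψ' x y ≤ (1 - a) ^ κ * (1 - a') ^ κ * breg ψ ψ' x xm := by
    calc breg ψ ψ' x y ≤ (1 - a) ^ κ * breg ψ ψ' x z := hT1
      _ ≤ (1 - a) ^ κ * ((1 - a') ^ κ * breg ψ ψ' x xm) :=
          mul_le_mul_of_nonneg_left hT2 hanonneg
      _ = (1 - a) ^ κ * (1 - a') ^ κ * breg ψ ψ' x xm := by ring
  -- three-point identity
  have h3pt : ⟪ψ' xp, x - xp⟫ - Q = breg ψ ψ' x y - breg ψ ψ' x xp - breg ψ ψ' xp y := by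
    simp only [breg, hQ]
    have : x - y = (xp - y) + (x - xp) := by abel
    rw [this, inner_add_right]
    ring
  -- combine everything into the real inequality
  have hinner : ⟪F' y, xp - y⟫ + B = ⟪F' y, x - y⟫ := by
    rw [hB, ← inner_add_right]
    congr 1
    abel
  have hfinal : F xp + gp + c * breg ψ ψ' x xp
      ≤ F x + gx + ((c + L) * ((1 - a) ^ κ * (1 - a') ^ κ) * breg ψ ψ' x xm
          - (c - L) * breg ψ ψ' xp y) := by
    rw [h3pt] at key
    have hmul : (c + L) * breg ψ ψ' x y
        ≤ (c + L) * ((1 - a) ^ κ * (1 - a') ^ κ * breg ψ ψ' x xm) :=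
      mul_le_mul_of_nonneg_left hT (by linarith)
    have e1 : c * (breg ψ ψ' x y - breg ψ ψ' x xp - breg ψ ψ' xp y)
        = c * breg ψ ψ' x y - c * breg ψ ψ' x xp - c * breg ψ ψ' xp y := by ring
    have e2 : (c + L) * breg ψ ψ' x y = c * breg ψ ψ' x y + L * breg ψ ψ' x y := by ring
    have e3 : (c + L) * ((1 - a) ^ κ * (1 - a') ^ κ * breg ψ ψ' x xm)
        = (c + L) * ((1 - a) ^ κ * (1 - a') ^ κ) * breg ψ ψ' x xm := by ring
    have e4 : (c - L) * breg ψ ψ' xp y = c * breg ψ ψ' xp y - L * breg ψ ψ' xp y := by ring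
    linarith [key, hF1, hF2, hinner, hmul, e1, e2, e3, e4]
  -- move back to EReal
  rw [hgp, hgx]
  have hcoe1 : (F xp : EReal) + (gp : EReal) + ((1 / γ * breg ψ ψ' x xp : ℝ) : EReal)
      = ((F xp + gp + c * breg ψ ψ' x xp : ℝ) : EReal) := by
    rw [← hc, ← EReal.coe_add, ← EReal.coe_add]
  have hcoe2 : (F x : EReal) + (gx : EReal)
      + (((1 / γ + L) * ((1 - a) ^ κ * (1 - a') ^ κ) * breg ψ ψ' x xm
          - (1 / γ - L) * breg ψ ψ' xp y : ℝ) : EReal)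
      = ((F x + gx + ((c + L) * ((1 - a) ^ κ * (1 - a') ^ κ) * breg ψ ψ' x xm
          - (c - L) * breg ψ ψ' xp y) : ℝ) : EReal) := by
    rw [← hc, ← EReal.coe_add, ← EReal.coe_add]
  rw [hcoe1, hcoe2]
  exact EReal.coe_le_coe_iff.mpr hfinal
end

section
/- Consider the IBPG iterates for Φ = F + G, where F : ℝⁿ → ℝ is C¹ and L-smooth adaptable relative to a C², σ_ψ-strongly convex function ψ : ℝⁿ → ℝ (σ_ψ > 0) whose Bregman divergence satisfies the triangle scaling property with exponent κ ∈ (1,2], G : ℝⁿ → ℝ ∪ {+∞} is proper, lower semicontinuous and convex, and Φ is bounded from below. Suppose the inertial parameters a_k ∈ [ā, ᾱ] ⊂ (0,1] and stepsizes γ_k = a_k^{κ−1}/L are such that there exists ν ∈ (0,1] with (L + 1/γ_k)·(1 − a_k)^κ (1 − a_{k−1})^κ ≤ (1 − ν)/γ_{k−1} for all k ≥ 0. Then Σ_{k≥0} ‖x_k − x_{k−1}‖² < ∞, and for every k ≥ 0: min_{0 ≤ i ≤ k} ‖x_i − x_{i−1}‖² ≤ 2·Ψ₀(x₀, x₋₁)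 / (σ_ψ ν L (k+1)), where Ψ₀(x₀, x₋₁) = Φ(x₀) − inf Φ + L·D_ψ(x₀, x₋₁). -/
open scoped RealInnerProductSpace

open Set

section helpers
variable {n : ℕ}
local notation "V" => EuclideanSpace ℝ (Fin n)

lemma line_hasDerivAt (φ : V → ℝ) (g : V) (p d : V) (t0 : ℝ)
    (h : HasGradientAt φ g (p + t0 • d)) :
    HasDerivAt (fun t : ℝ => φ (p + t • d)) ⟪g, d⟫ t0 := by
  have hc : HasDerivAt (fun t : ℝ => p + t • d) d t0 := by
    simpa using ((hasDerivAt_id t0).smul_const d).const_add p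
  have hf := h.hasFDerivAt.comp_hasDerivAt t0 hc
  simpa [InnerProductSpace.toDual_apply_apply, Function.comp_def] using hf

lemma convex_grad_ineq_s3 (φ : V → ℝ) (g : V) (x y : V)
    (hconv : ConvexOn ℝ Set.univ φ) (hg : HasGradientAt φ g y) :
    ⟪g, x - y⟫ ≤ φ x - φ y := by
  have hd : HasDerivAt (fun t : ℝ => φ (y + t • (x - y))) ⟪g, x - y⟫ 0 := by
    apply line_hasDerivAt
    simpa using hg
  have hslope : Filter.Tendsto (slope (fun t : ℝ => φ (y + t • (x - y))) 0) (nhdsWithin 0 (Ioi 0))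
      (nhds ⟪g, x - y⟫) := by
    have := hasDerivAt_iff_tendsto_slope.1 hd
    exact this.mono_left (nhdsWithin_mono _ (by intro t ht; exact ne_of_gt ht))
  refine le_of_tendsto hslope ?_
  filter_upwards [Ioc_mem_nhdsGT_of_mem (Set.mem_Ico.2 ⟨le_refl (0:ℝ), zero_lt_one⟩)] with t ht
  have ht0 : 0 < t := ht.1
  have ht1 : t ≤ 1 := ht.2
  have hcomb : φ (y + t • (x - y)) ≤ (1 - t) * φ y + t * φ x := by
    have := hconv.2 (mem_univ x) (mem_univ y) ht0.le (by linarith : (0:ℝ) ≤ 1 - t)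
      (by ring : t + (1 - t) = 1)
    -- this : φ (t • x + (1-t) • y) ≤ t * φ x + (1-t) * φ y
    have hpt : t • x + (1 - t) • y = y + t • (x - y) := by
      simp [smul_sub, sub_smul, one_smul]; abel
    rw [hpt] at this; simp only [smul_eq_mul] at this; linarith
  rw [slope_def_field]
  have : (φ (y + t • (x - y)) - φ y) / t ≤ φ x - φ y := by
    rw [div_le_iff₀ ht0]; nlinarith
  simpa [div_eq_inv_mul] using this

lemma hasGradientAt_normsq (c : ℝ) (v : V) :
    HasGradientAt (fun u : V => c / 2 * ‖u‖ ^ 2) (c • v) v := by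
  rw [hasGradientAt_iff_hasFDerivAt]
  have h1 : HasFDerivAt (fun u : V => (⟪u, u⟫ : ℝ))
      ((fderivInnerCLM ℝ (v, v)).comp ((ContinuousLinearMap.id ℝ V).prod
        (ContinuousLinearMap.id ℝ V))) v :=
    (hasFDerivAt_id v).inner ℝ (hasFDerivAt_id v)
  have h2 : HasFDerivAt (fun u : V => c / 2 * ‖u‖ ^ 2)
      ((c / 2) • ((fderivInnerCLM ℝ (v, v)).comp ((ContinuousLinearMap.id ℝ V).prod
        (ContinuousLinearMap.id ℝ V)))) v := by
    have := h1.const_smul (c / 2)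
    apply this.congr_of_eventuallyEq
    filter_upwards with u
    rw [Pi.smul_apply, real_inner_self_eq_norm_sq, smul_eq_mul]
  refine h2.congr_fderiv ?_
  apply ContinuousLinearMap.ext
  intro w
  simp [InnerProductSpace.toDual_apply_apply, fderivInnerCLM_apply, real_inner_smul_left,
    real_inner_comm v w]
  ring

lemma hasGradientAt_combo (φ h : V → ℝ) (gφ gh : V) (c e : ℝ) (v : V)
    (hφ : HasGradientAt φ gφ v) (hh : HasGradientAt h gh v) :
    HasGradientAt (fun u => c * φ u + e * h u) (c • gφ + e • gh) v := by
  rw [hasGradientAt_iff_hasFDerivAt] at *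
  have h2 : HasFDerivAt (fun u => c * φ u + e * h u)
      (c • (InnerProductSpace.toDual ℝ V gφ) + e • (InnerProductSpace.toDual ℝ V gh)) v := by
    have := (hφ.const_smul c).add (hh.const_smul e)
    apply this.congr_of_eventuallyEq
    filter_upwards with u
    simp [smul_eq_mul]
  refine h2.congr_fderiv ?_
  apply ContinuousLinearMap.ext
  intro w
  simp [InnerProductSpace.toDual_apply_apply, real_inner_smul_left, inner_add_left]

lemma breg_lower (σ : ℝ) (ψ : V → ℝ) (ψ' : V → V)
    (hψgrad : ∀ u, HasGradientAt ψ (ψ' u) u)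
    (hψstrong : ConvexOn ℝ Set.univ (fun u => ψ u - σ / 2 * ‖u‖ ^ 2))
    (u v : V) : σ / 2 * ‖u - v‖ ^ 2 ≤ breg ψ ψ' u v := by
  have hg : HasGradientAt (fun w => ψ w - σ / 2 * ‖w‖ ^ 2) (ψ' v - σ • v) v := by
    have := hasGradientAt_combo ψ (fun w : V => σ / 2 * ‖w‖ ^ 2) (ψ' v) (σ • v) 1 (-1) v
      (hψgrad v) (hasGradientAt_normsq σ v)
    simp only [one_mul, one_smul, neg_one_mul, neg_one_smul] at this
    simpa [sub_eq_add_neg] using this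
  have hconv2 : ConvexOn ℝ Set.univ (fun w : V => ψ w - σ / 2 * ‖w‖ ^ 2) := hψstrong
  have h := convex_grad_ineq_s3 _ _ u v hconv2 hg
  have hexp : (⟪ψ' v - σ • v, u - v⟫ : ℝ) = ⟪ψ' v, u - v⟫ - σ * ⟪v, u - v⟫ := by
    rw [inner_sub_left, real_inner_smul_left]
  have hnorm : ‖u - v‖ ^ 2 = ‖u‖ ^ 2 - 2 * ⟪v, u - v⟫ - ‖v‖ ^ 2 := by
    have e1 : (⟪u - v, u - v⟫ : ℝ) = ‖u - v‖ ^ 2 := real_inner_self_eq_norm_sq _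
    have e2 : (⟪u, u⟫ : ℝ) = ‖u‖ ^ 2 := real_inner_self_eq_norm_sq _
    have e3 : (⟪v, v⟫ : ℝ) = ‖v‖ ^ 2 := real_inner_self_eq_norm_sq _
    have e4 : (⟪u - v, u - v⟫ : ℝ) = ⟪u, u⟫ - 2 * ⟪v, u⟫ + ⟪v,v⟫ := by
      simp only [inner_sub_left, inner_sub_right, real_inner_comm u v]; ring
    have e5 : (⟪v, u - v⟫ : ℝ) = ⟪v, u⟫ - ⟪v, v⟫ := by simp [inner_sub_right]
    rw [← e1, e4, e5, e2, e3]; ring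
  unfold breg
  rw [hexp] at h
  rw [hnorm]
  linarith

lemma smad_bound (L : ℝ) (ψ F : V → ℝ) (ψ' F' : V → V)
    (hψgrad : ∀ u, HasGradientAt ψ (ψ' u) u) (hFgrad : ∀ u, HasGradientAt F (F' u) u)
    (e : ℝ) (he : e = 1 ∨ e = -1)
    (hsmad : ConvexOn ℝ Set.univ (fun u => L * ψ u + e * F u))
    (x y : V) :
    -e * (F x - F y - ⟪F' y, x - y⟫) ≤ L * breg ψ ψ' x y := by
  have hg := hasGradientAt_combo ψ F (ψ' y) (F' y) L e y (hψgrad y) (hFgrad y)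
  have h := convex_grad_ineq_s3 _ _ x y hsmad hg
  have hexp : (⟪L • ψ' y + e • F' y, x - y⟫ : ℝ)
      = L * ⟪ψ' y, x - y⟫ + e * ⟪F' y, x - y⟫ := by
    rw [inner_add_left, real_inner_smul_left, real_inner_smul_left]
  rw [hexp] at h
  unfold breg
  rcases he with he | he <;> subst he <;> nlinarith [h]

lemma tsp_shift (κ : ℝ) (ψ : V → ℝ) (ψ' : V → V)
    (hTSP : ∀ u v w : V, ∀ t : ℝ, 0 ≤ t → t ≤ 1 →
      breg ψ ψ' ((1 - t) • u + t • v) ((1 - t) • u + t • w) ≤ t ^ κ * breg ψ ψ' v w)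
    (P Q e : V) (t : ℝ) (ht0 : 0 < t) (ht1 : t < 1) :
    breg ψ ψ' (P + t • e) P ≤ t ^ κ * breg ψ ψ' (Q + e) Q := by
  have h1t : (1 - t) ≠ 0 := by linarith
  have := hTSP ((1 - t)⁻¹ • (P - t • Q)) (Q + e) Q t ht0.le ht1.le
  have e2 : (1 - t) • ((1 - t)⁻¹ • (P - t • Q)) + t • Q = P := by
    rw [smul_inv_smul₀ h1t]; abel
  have e1 : (1 - t) • ((1 - t)⁻¹ • (P - t • Q)) + t • (Q + e) = P + t • e := by
    rw [smul_add]; rw [← add_assoc, e2]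
  rwa [e1, e2] at this

-- translation invariance of the Bregman divergence

lemma breg_trans (κ : ℝ) (hκ : 1 < κ) (ψ : V → ℝ) (ψ' : V → V)
    (hψcont : Continuous ψ)
    (hTSP : ∀ u v w : V, ∀ t : ℝ, 0 ≤ t → t ≤ 1 →
      breg ψ ψ' ((1 - t) • u + t • v) ((1 - t) • u + t • w) ≤ t ^ κ * breg ψ ψ' v w)
    (P Q δ : V) : breg ψ ψ' (P + δ) P = breg ψ ψ' (Q + δ) Q := by
  -- suffices ≤ by symmetry in P Q
  suffices h : ∀ P Q : V, breg ψ ψ' (P + δ) P ≤ breg ψ ψ' (Q + δ) Q by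
    exact le_antisymm (h P Q) (h Q P)
  intro P Q
  -- the function  t ↦ t^κ * breg ψ ψ' (Q + t⁻¹ • δ) Q  tends to breg ψ ψ' (Q+δ) Q as t → 1⁻
  have hcont : Filter.Tendsto (fun t : ℝ => t ^ κ * breg ψ ψ' (Q + t⁻¹ • δ) Q)
      (nhdsWithin 1 (Iio 1)) (nhds (breg ψ ψ' (Q + δ) Q)) := by
    have h1 : Filter.Tendsto (fun t : ℝ => t ^ κ * breg ψ ψ' (Q + t⁻¹ • δ) Q)
        (nhds 1) (nhds ((1:ℝ) ^ κ * breg ψ ψ' (Q + (1:ℝ)⁻¹ • δ) Q)) := by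
      apply Filter.Tendsto.mul
      · exact (Real.continuousAt_rpow_const 1 κ (Or.inl one_ne_zero)).tendsto
      · unfold breg
        have hinv : ContinuousAt (fun t : ℝ => t⁻¹) 1 := continuousAt_inv₀ one_ne_zero
        have harg : ContinuousAt (fun t : ℝ => Q + t⁻¹ • δ) 1 :=
          (continuousAt_const.add (hinv.smul continuousAt_const))
        have hψc : ContinuousAt (fun t : ℝ => ψ (Q + t⁻¹ • δ)) 1 :=
          (hψcont.continuousAt).comp harg
        have hinner : ContinuousAt (fun t : ℝ => (⟪ψ' Q, (Q + t⁻¹ • δ) - Q⟫ : ℝ)) 1 := by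
          apply ContinuousAt.inner continuousAt_const
          exact harg.sub continuousAt_const
        exact (hψc.sub continuousAt_const).sub hinner
    simp only [Real.one_rpow, inv_one, one_smul, one_mul] at h1
    exact h1.mono_left nhdsWithin_le_nhds
  refine ge_of_tendsto hcont ?_
  filter_upwards [Ioo_mem_nhdsLT_of_mem (Set.mem_Ioc.2 ⟨(by norm_num : (0:ℝ) < 1), le_refl (1:ℝ)⟩)] with t ht
  have ht0 : 0 < t := ht.1
  have := tsp_shift κ ψ ψ' hTSP P Q (t⁻¹ • δ) t ht0 ht.2
  rwa [smul_inv_smul₀ (ne_of_gt ht0)] at this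

lemma breg_symm (ψ : V → ℝ) (ψ' : V → V)
    (hψgrad : ∀ u, HasGradientAt ψ (ψ' u) u)
    (htr : ∀ P Q δ : V, breg ψ ψ' (P + δ) P = breg ψ ψ' (Q + δ) Q)
    (x y : V) : breg ψ ψ' x y = breg ψ ψ' y x := by
  -- the displacement function
  set c : V → ℝ := fun δ => breg ψ ψ' (0 + δ) 0 with hc
  have hstar : ∀ x e : V, ψ (x + e) - ψ x - ⟪ψ' x, e⟫ = c e := by
    intro x e
    have h := htr x 0 e
    simp only [hc]
    unfold breg at h ⊢
    have e1 : x + e - x = e := by abel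
    have e2 : (0 : V) + e - 0 = e := by abel
    rw [e1, e2] at h
    rw [e2]
    exact h
  have grad_inc : ∀ (x e f : V), (⟪ψ' (x + e) - ψ' x, f⟫ : ℝ) = c (e + f) - c e - c f := by
    intro x e f
    have h1 := hstar x (e + f)
    have h2 := hstar (x + e) f
    have h3 := hstar x e
    rw [inner_sub_left]
    rw [← add_assoc] at h1
    rw [inner_add_right] at h1
    linarith
  -- it suffices to show c is even
  suffices hev : ∀ δ : V, c δ = c (-δ) by
    have h1 : breg ψ ψ' x y = c (x - y) := by
      have h := htr y 0 (x - y)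
      have e1 : y + (x - y) = x := by abel
      rw [e1] at h
      simp only [hc]
      exact h
    have h2 : breg ψ ψ' y x = c (y - x) := by
      have h := htr x 0 (y - x)
      have e1 : x + (y - x) = y := by abel
      rw [e1] at h
      simp only [hc]
      exact h
    rw [h1, h2, hev (x - y), neg_sub]
  intro δ
  -- q t = c (t • δ), ℓ t = ⟪ψ' (t•δ) - ψ' 0, δ⟫, B = c(2δ) - 2 c(δ)
  set q : ℝ → ℝ := fun t => c (t • δ) with hq
  set l : ℝ → ℝ := fun t => (⟪ψ' (t • δ) - ψ' 0, δ⟫ : ℝ) with hl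
  set B : ℝ := c (δ + δ) - c δ - c δ with hB
  have hqt : ∀ t : ℝ, q t = ψ (0 + t • δ) - ψ 0 - t * ⟪ψ' 0, δ⟫ := by
    intro t
    simp only [hq, hc]
    unfold breg
    have e1 : (0 : V) + t • δ - 0 = t • δ := by abel
    rw [e1, real_inner_smul_right]
  have hq' : ∀ t : ℝ, HasDerivAt q (l t) t := by
    intro t
    have h1 : HasDerivAt (fun s : ℝ => ψ (0 + s • δ)) ⟪ψ' (t • δ), δ⟫ t := by
      apply line_hasDerivAt
      simpa using hψgrad (t • δ)
    have h2 : HasDerivAt (fun s : ℝ => ψ (0 + s • δ) - ψ 0 - s * ⟪ψ' 0, δ⟫)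
        (⟪ψ' (t • δ), δ⟫ - ⟪ψ' 0, δ⟫) t := by
      simpa [Pi.sub_def] using (h1.sub_const (ψ 0)).sub ((hasDerivAt_id t).mul_const (⟪ψ' 0, δ⟫ : ℝ))
    have : HasDerivAt q (⟪ψ' (t • δ), δ⟫ - ⟪ψ' 0, δ⟫) t := by
      apply h2.congr_of_eventuallyEq
      filter_upwards with s
      rw [hqt s]
    simpa [hl, inner_sub_left] using this
  have hlB : ∀ t : ℝ, l (t + 1) - l t = B := by
    intro t
    have := grad_inc (t • δ) δ δ
    have harg : t • δ + δ = (t + 1) • δ := by rw [add_smul, one_smul]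
    rw [harg] at this
    simp only [hl, hB]
    rw [inner_sub_left, inner_sub_left] at *
    linarith [this]
  have hl' : ∀ t : ℝ, HasDerivAt l B t := by
    intro t
    have h1 : HasDerivAt (fun s : ℝ => q (s + 1)) (l (t + 1)) t := by
      have := (hq' (t + 1)).comp t ((hasDerivAt_id t).add_const 1)
      simpa [Function.comp_def] using this
    have h2 : HasDerivAt (fun s : ℝ => q (s + 1) - q s - q 1) (l (t + 1) - l t) t := by
      simpa using (h1.sub (hq' t)).sub_const (q 1)
    have h3 : HasDerivAt l (l (t + 1) - l t) t := by
      apply h2.congr_of_eventuallyEq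
      filter_upwards with s
      have := grad_inc (0 : V) (s • δ) δ
      have harg : s • δ + δ = (s + 1) • δ := by rw [add_smul, one_smul]
      simp only [zero_add, harg] at this
      simp only [hl, hq, one_smul]
      rw [this]
    rwa [hlB t] at h3
  -- hence l t = B * t
  have hlin : ∀ t : ℝ, l t = B * t := by
    have hconst : ∀ t : ℝ, l t - B * t = l 0 - B * 0 := by
      intro t
      have hd : ∀ s : ℝ, HasDerivAt (fun r : ℝ => l r - B * r) 0 s := by
        intro s
        simpa [Pi.sub_def] using (hl' s).sub ((hasDerivAt_id s).const_mul B)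
      have := is_const_of_deriv_eq_zero (f := fun r : ℝ => l r - B * r)
        (fun s => (hd s).differentiableAt) (fun s => (hd s).deriv) t 0
      exact this
    intro t
    have h0 : l 0 = 0 := by simp [hl]
    have := hconst t; rw [h0] at this; linarith
  -- hence q t = B * t^2 / 2  (since q 0 = 0)
  have hquad : ∀ t : ℝ, q t = B * t ^ 2 / 2 := by
    have hconst : ∀ t : ℝ, q t - B * t ^ 2 / 2 = q 0 - B * 0 ^ 2 / 2 := by
      intro t
      have hd : ∀ s : ℝ, HasDerivAt (fun r : ℝ => q r - B * r ^ 2 / 2) 0 s := by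
        intro s
        have h1 : HasDerivAt (fun r : ℝ => B * r ^ 2 / 2) (B * s) s := by
          have := ((hasDerivAt_pow 2 s).const_mul B).div_const 2
          simpa using this.congr_deriv (by push_cast; ring)
        have := (hq' s).sub h1
        rw [hlin s] at this
        simpa [Pi.sub_def] using this
      exact is_const_of_deriv_eq_zero (f := fun r : ℝ => q r - B * r ^ 2 / 2)
        (fun s => (hd s).differentiableAt) (fun s => (hd s).deriv) t 0
    intro t
    have h0 : q 0 = 0 := by
      simp only [hq, zero_smul, hc]
      unfold breg
      simp
    have := hconst t; rw [h0] at this; linarith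
  have e1 : c δ = q 1 := by simp [hq]
  have e2 : c (-δ) = q (-1) := by simp only [hq]; norm_num
  rw [e1, e2, hquad 1, hquad (-1)]
  norm_num

lemma G_finite (ψ : V → ℝ) (ψ' : V → V) (G : V → EReal)
    (hGproper : ∃ u, G u ≠ ⊤) (hGnobot : ∀ u, G u ≠ ⊥)
    (g : V) (ρ : ℝ) (y xp : V)
    (hmin : ∀ u, ((⟪g, xp⟫ : ℝ) : EReal) + G xp + ((ρ * breg ψ ψ' xp y : ℝ) : EReal)
      ≤ ((⟪g, u⟫ : ℝ) : EReal) + G u + ((ρ * breg ψ ψ' u y : ℝ) : EReal)) :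
    G xp ≠ ⊤ := by
  intro htop
  obtain ⟨u₀, hu₀⟩ := hGproper
  obtain ⟨g₀, hg₀⟩ : ∃ g₀ : ℝ, G u₀ = (g₀ : EReal) :=
    ⟨(G u₀).toReal, (EReal.coe_toReal hu₀ (hGnobot u₀)).symm⟩
  have h := hmin u₀
  rw [htop, hg₀] at h
  have hL : ((⟪g, xp⟫ : ℝ) : EReal) + ⊤ + ((ρ * breg ψ ψ' xp y : ℝ) : EReal) = ⊤ := by
    rw [EReal.coe_add_top, EReal.top_add_coe]
  have hR : ((⟪g, u₀⟫ : ℝ) : EReal) + (g₀ : EReal) + ((ρ * breg ψ ψ' u₀ y : ℝ) : EReal)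
      = ((⟪g, u₀⟫ + g₀ + ρ * breg ψ ψ' u₀ y : ℝ) : EReal) := by
    rw [EReal.coe_add, EReal.coe_add]
  rw [hL, hR] at h
  exact (EReal.coe_lt_top _).not_ge h

-- three point inequality

lemma three_point (ψ : V → ℝ) (ψ' : V → V)
    (hψgrad : ∀ u, HasGradientAt ψ (ψ' u) u)
    (G : V → EReal) (hGnobot : ∀ u, G u ≠ ⊥)
    (hGconv : ∀ u v : V, ∀ t : ℝ, 0 ≤ t → t ≤ 1 →
      G (t • u + (1 - t) • v) ≤ (t : EReal) * G u + ((1 - t : ℝ) : EReal) * G v)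
    (g : V) (ρ : ℝ) (hρ : 0 < ρ) (y xp : V)
    (hmin : ∀ u, ((⟪g, xp⟫ : ℝ) : EReal) + G xp + ((ρ * breg ψ ψ' xp y : ℝ) : EReal)
      ≤ ((⟪g, u⟫ : ℝ) : EReal) + G u + ((ρ * breg ψ ψ' u y : ℝ) : EReal))
    (hfin : G xp ≠ ⊤) (u : V) (hufin : G u ≠ ⊤) :
    ⟪g, xp - u⟫ + (G xp).toReal - (G u).toReal
      ≤ ρ * (breg ψ ψ' u y - breg ψ ψ' u xp - breg ψ ψ' xp y) := by
  obtain ⟨gp, hgp⟩ : ∃ gp : ℝ, G xp = (gp : EReal) :=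
    ⟨(G xp).toReal, (EReal.coe_toReal hfin (hGnobot xp)).symm⟩
  obtain ⟨gu, hgu⟩ : ∃ gu : ℝ, G u = (gu : EReal) :=
    ⟨(G u).toReal, (EReal.coe_toReal hufin (hGnobot u)).symm⟩
  rw [hgp, hgu]
  simp only [EReal.toReal_coe]
  set d : V := u - xp with hd
  -- the key family of real inequalities
  have key : ∀ t : ℝ, t ∈ Ioc (0:ℝ) 1 →
      t * (⟪g, xp - u⟫ + gp - gu) ≤ ρ * (ψ (xp + t • d) - ψ xp - t * ⟪ψ' y, d⟫) := by
    intro t ht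
    have ht0 := ht.1
    have ht1 := ht.2
    have hGc := hGconv u xp t ht0.le ht1
    have hcomb : t • u + (1 - t) • xp = xp + t • d := by
      simp only [hd, smul_sub, sub_smul, one_smul]; abel
    rw [hcomb, hgp, hgu] at hGc
    have hGc' : G (xp + t • d) ≤ ((t * gu + (1 - t) * gp : ℝ) : EReal) := by
      rw [EReal.coe_add, EReal.coe_mul, EReal.coe_mul]; exact hGc
    have h := hmin (xp + t • d)
    rw [hgp] at h
    have h2 : ((⟪g, xp⟫ : ℝ) : EReal) + (gp : EReal) + ((ρ * breg ψ ψ' xp y : ℝ) : EReal)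
        ≤ ((⟪g, xp + t • d⟫ : ℝ) : EReal) + ((t * gu + (1 - t) * gp : ℝ) : EReal)
          + ((ρ * breg ψ ψ' (xp + t • d) y : ℝ) : EReal) := by
      refine le_trans h ?_
      gcongr
    rw [← EReal.coe_add, ← EReal.coe_add, ← EReal.coe_add, ← EReal.coe_add,
      EReal.coe_le_coe_iff] at h2
    -- now real arithmetic
    unfold breg at h2
    have e1 : xp + t • d - y = (xp - y) + t • d := by abel
    have e2 : (⟪g, xp + t • d⟫ : ℝ) = ⟪g, xp⟫ + t * ⟪g, d⟫ := by
      rw [inner_add_right, real_inner_smul_right]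
    have e3 : (⟪ψ' y, xp + t • d - y⟫ : ℝ) = ⟪ψ' y, xp - y⟫ + t * ⟪ψ' y, d⟫ := by
      rw [e1, inner_add_right, real_inner_smul_right]
    rw [e2, e3] at h2
    have e4 : (⟪g, xp - u⟫ : ℝ) = -⟪g, d⟫ := by
      rw [hd, ← inner_neg_right]; congr 1; abel
    rw [e4]
    nlinarith [h2]
  -- pass to the limit t → 0⁺
  have hder : HasDerivAt (fun t : ℝ => ψ (xp + t • d)) ⟪ψ' xp, d⟫ 0 := by
    apply line_hasDerivAt
    simpa using hψgrad xp
  have hlim : Filter.Tendsto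
      (fun t : ℝ => ρ * ((ψ (xp + t • d) - ψ xp) / t - ⟪ψ' y, d⟫))
      (nhdsWithin 0 (Ioi 0)) (nhds (ρ * (⟪ψ' xp, d⟫ - ⟪ψ' y, d⟫))) := by
    apply Filter.Tendsto.const_mul
    apply Filter.Tendsto.sub_const
    have hslope := hasDerivAt_iff_tendsto_slope.1 hder
    have hmono : nhdsWithin (0:ℝ) (Ioi 0) ≤ nhdsWithin 0 {(0:ℝ)}ᶜ :=
      nhdsWithin_mono _ (fun t ht => ne_of_gt ht)
    have := hslope.mono_left hmono
    apply this.congr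
    intro t
    rw [slope_def_field]
    rw [div_eq_inv_mul]
    ring_nf
    simp
  have hfinal : ⟪g, xp - u⟫ + gp - gu ≤ ρ * (⟪ψ' xp, d⟫ - ⟪ψ' y, d⟫) := by
    refine ge_of_tendsto hlim ?_
    filter_upwards [Ioc_mem_nhdsGT_of_mem (Set.mem_Ico.2 ⟨le_refl (0:ℝ), zero_lt_one⟩)] with t ht
    have := key t ht
    have ht0 := ht.1
    rw [mul_comm t _] at this
    rw [← le_div_iff₀ ht0] at this
    calc ⟪g, xp - u⟫ + gp - gu ≤ ρ * (ψ (xp + t • d) - ψ xp - t * ⟪ψ' y, d⟫) / t := this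
      _ = ρ * ((ψ (xp + t • d) - ψ xp) / t - ⟪ψ' y, d⟫) := by field_simp
  refine le_trans hfinal ?_
  unfold breg
  have e5 : (⟪ψ' y, u - y⟫ : ℝ) = ⟪ψ' y, xp - y⟫ + ⟪ψ' y, d⟫ := by
    rw [← inner_add_right]; congr 1; rw [hd]; abel
  have e6 : (⟪ψ' xp, u - xp⟫ : ℝ) = ⟪ψ' xp, d⟫ := by rw [hd]
  rw [e5, e6]
  apply le_of_eq
  ring

lemma master_step (L : ℝ) (ψ F : V → ℝ) (ψ' F' : V → V)
    (hψgrad : ∀ u, HasGradientAt ψ (ψ' u) u) (hFgrad : ∀ u, HasGradientAt F (F' u) u)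
    (hsmad₁ : ConvexOn ℝ Set.univ (fun u => L * ψ u - F u))
    (hsmad₂ : ConvexOn ℝ Set.univ (fun u => L * ψ u + F u))
    (G : V → EReal) (hGnobot : ∀ u, G u ≠ ⊥)
    (hGconv : ∀ u v : V, ∀ t : ℝ, 0 ≤ t → t ≤ 1 →
      G (t • u + (1 - t) • v) ≤ (t : EReal) * G u + ((1 - t : ℝ) : EReal) * G v)
    (ρ : ℝ) (hρ : 0 < ρ) (y xp : V)
    (hmin : ∀ u, ((⟪F' y, xp⟫ : ℝ) : EReal) + G xp + ((ρ * breg ψ ψ' xp y : ℝ) : EReal)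
      ≤ ((⟪F' y, u⟫ : ℝ) : EReal) + G u + ((ρ * breg ψ ψ' u y : ℝ) : EReal))
    (hfin : G xp ≠ ⊤) (u : V) (hufin : G u ≠ ⊤) :
    F xp + (G xp).toReal + ρ * breg ψ ψ' u xp + (ρ - L) * breg ψ ψ' xp y
      ≤ F u + (G u).toReal + (ρ + L) * breg ψ ψ' u y := by
  have h3 := three_point ψ ψ' hψgrad G hGnobot hGconv (F' y) ρ hρ y xp hmin hfin u hufin
  have hup := smad_bound L ψ F ψ' F' hψgrad hFgrad (-1) (Or.inr rfl)
    (by simpa [neg_one_mul, sub_eq_add_neg] using hsmad₁) xp y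
  have hlo := smad_bound L ψ F ψ' F' hψgrad hFgrad 1 (Or.inl rfl) (by simpa using hsmad₂) u y
  simp only [neg_neg, neg_one_mul, one_mul, neg_mul] at hup hlo
  -- hup : F xp - F y - ⟪F' y, xp - y⟫ ≤ L * breg ψ ψ' xp y
  -- hlo : -(F u - F y - ⟪F' y, u - y⟫) ≤ L * breg ψ ψ' u y
  have e1 : (⟪F' y, xp - u⟫ : ℝ) = ⟪F' y, xp⟫ - ⟪F' y, u⟫ := inner_sub_right _ _ _
  have e2 : (⟪F' y, xp - y⟫ : ℝ) = ⟪F' y, xp⟫ - ⟪F' y, y⟫ := inner_sub_right _ _ _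
  have e3 : (⟪F' y, u - y⟫ : ℝ) = ⟪F' y, u⟫ - ⟪F' y, y⟫ := inner_sub_right _ _ _
  rw [e1] at h3
  rw [e2] at hup
  rw [e3] at hlo
  linarith

end helpers

lemma telescope_bound (ν : ℝ) (Φr E : ℕ → ℝ) (hE : ∀ m, 0 ≤ E m)
    (Φstar : ℝ) (hΦ : ∀ m : ℕ, 1 ≤ m → Φstar ≤ Φr m)
    (hkey : ∀ m : ℕ, Φr (m + 2) + E (m + 1) ≤ Φr (m + 1) + (1 - ν) * E m) :
    ∀ K : ℕ, ν * (∑ j ∈ Finset.range K, E j) ≤ Φr 1 + E 0 - Φstar := by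
  have hT : ∀ K : ℕ, Φr (K + 1) + E K + ν * (∑ j ∈ Finset.range K, E j) ≤ Φr 1 + E 0 := by
    intro K
    induction K with
    | zero => simp
    | succ m ih =>
      rw [Finset.sum_range_succ]
      have := hkey m
      nlinarith [this, ih]
  intro K
  have h := hT K
  have h1 := hΦ (K + 1) (by omega)
  have h2 := hE K
  linarith


set_option maxHeartbeats 1000000 in
/-- summability of squared successive differences and the `O(1/k)` rate
on the minimal squared step for the IBPG iterates. -/
theorem stmt3 {n : ℕ} (L σψ κ ν abar aupp : ℝ)
    (ψ F : EuclideanSpace ℝ (Fin n) → ℝ)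
    (ψ' F' : EuclideanSpace ℝ (Fin n) → EuclideanSpace ℝ (Fin n))
    (G : EuclideanSpace ℝ (Fin n) → EReal)
    (x y z : ℤ → EuclideanSpace ℝ (Fin n)) (a γ : ℤ → ℝ)
    (hL : 0 < L) (hσψ : 0 < σψ) (hκ : 1 < κ) (hκ2 : κ ≤ 2)
    (hν0 : 0 < ν) (hν1 : ν ≤ 1)
    -- F is C¹ with gradient F'
    (hFC1 : ContDiff ℝ 1 F) (hFgrad : ∀ u, HasGradientAt F (F' u) u)
    -- ψ is C², σψ-strongly convex, with gradient ψ'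
    (hψC2 : ContDiff ℝ 2 ψ) (hψgrad : ∀ u, HasGradientAt ψ (ψ' u) u)
    (hψstrong : ConvexOn ℝ Set.univ (fun u => ψ u - σψ / 2 * ‖u‖ ^ 2))
    -- F is L-smooth adaptable relative to ψ
    (hsmad₁ : ConvexOn ℝ Set.univ (fun u => L * ψ u - F u))
    (hsmad₂ : ConvexOn ℝ Set.univ (fun u => L * ψ u + F u))
    -- D_ψ satisfies the triangle scaling property with exponent κ
    (hTSP : ∀ u v w : EuclideanSpace ℝ (Fin n), ∀ t : ℝ, 0 ≤ t → t ≤ 1 →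
      breg ψ ψ' ((1 - t) • u + t • v) ((1 - t) • u + t • w) ≤ t ^ κ * breg ψ ψ' v w)
    -- G is proper, lsc, convex
    (hGproper : ∃ u, G u ≠ ⊤) (hGnobot : ∀ u, G u ≠ ⊥)
    (hGlsc : LowerSemicontinuous G)
    (hGconv : ∀ u v : EuclideanSpace ℝ (Fin n), ∀ t : ℝ, 0 ≤ t → t ≤ 1 →
      G (t • u + (1 - t) • v) ≤ (t : EReal) * G u + ((1 - t : ℝ) : EReal) * G v)
    -- Φ = F + G is bounded from below
    (hbdd : ∃ m : ℝ, ∀ u, (m : EReal) ≤ (F u : EReal) + G u)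
    -- inertial parameters and stepsizes
    (habar : 0 < abar) (haupp : aupp ≤ 1) (hbarle : abar ≤ aupp)
    (hainit : a (-1) = 1 ∧ a 0 = 1)
    (ha : ∀ k : ℤ, 1 ≤ k → a k ∈ Set.Icc abar aupp)
    (hγ : ∀ k : ℤ, -1 ≤ k → γ k = a k ^ (κ - 1) / L)
    (hνcond : ∀ k : ℤ, 0 ≤ k →
      (L + 1 / γ k) * ((1 - a k) ^ κ * (1 - a (k - 1)) ^ κ) ≤ (1 - ν) / γ (k - 1))
    -- IBPG iterates
    (hzm1 : z (-1) = x (-1)) (hz0 : z 0 = x 0)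
    (hy : ∀ k : ℤ, 0 ≤ k → y k = z k + a k • (x k - z k))
    (hxmin : ∀ k : ℤ, 0 ≤ k → ∀ u,
      ((⟪F' (y k), x (k + 1)⟫ : ℝ) : EReal) + G (x (k + 1))
          + ((1 / γ k * breg ψ ψ' (x (k + 1)) (y k) : ℝ) : EReal)
        ≤ ((⟪F' (y k), u⟫ : ℝ) : EReal) + G u
          + ((1 / γ k * breg ψ ψ' u (y k) : ℝ) : EReal))
    (hzrec : ∀ k : ℤ, 0 ≤ k → z (k + 1) = x k + a k • (x (k + 1) - x k)) :
    Summable (fun k : ℕ => ‖x (k : ℤ) - x ((k : ℤ) - 1)‖ ^ 2) ∧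
    ∀ k : ℕ, ∃ i : ℕ, i ≤ k ∧
      ((σψ * ν * L * ((k : ℝ) + 1) / 2 * ‖x (i : ℤ) - x ((i : ℤ) - 1)‖ ^ 2 : ℝ) : EReal)
        ≤ (F (x 0) : EReal) + G (x 0) + ((L * breg ψ ψ' (x 0) (x (-1)) : ℝ) : EReal)
          - ⨅ u, ((F u : EReal) + G u) := by
  -- basic facts
  have hsym : ∀ p q, breg ψ ψ' p q = breg ψ ψ' q p :=
    breg_symm ψ ψ' hψgrad (breg_trans κ hκ ψ ψ' hψC2.continuous hTSP)
  have hDnn : ∀ p q, 0 ≤ breg ψ ψ' p q := by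
    intro p q
    refine le_trans ?_ (breg_lower σψ ψ ψ' hψgrad hψstrong p q)
    positivity
  have hDlow : ∀ p q, σψ / 2 * ‖p - q‖ ^ 2 ≤ breg ψ ψ' p q :=
    breg_lower σψ ψ ψ' hψgrad hψstrong
  have hab : ∀ k : ℤ, -1 ≤ k → 0 < a k ∧ a k ≤ 1 := by
    intro k hk
    by_cases h1 : 1 ≤ k
    · obtain ⟨h2, h3⟩ := ha k h1
      exact ⟨lt_of_lt_of_le habar h2, le_trans h3 haupp⟩
    · have : k = -1 ∨ k = 0 := by omega
      rcases this with h | h <;> subst h <;>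
        [rw [hainit.1]; rw [hainit.2]] <;> exact ⟨one_pos, le_refl 1⟩
  have hγpos : ∀ k : ℤ, -1 ≤ k → 0 < γ k := by
    intro k hk
    rw [hγ k hk]
    have := (hab k hk).1
    positivity
  have hρL : ∀ k : ℤ, -1 ≤ k → L ≤ 1 / γ k := by
    intro k hk
    rw [hγ k hk, one_div_div]
    rw [le_div_iff₀ (Real.rpow_pos_of_pos (hab k hk).1 _)]
    nlinarith [Real.rpow_le_one (hab k hk).1.le (hab k hk).2 (by linarith : (0:ℝ) ≤ κ - 1)]
  have hρpos : ∀ k : ℤ, -1 ≤ k → 0 < 1 / γ k := fun k hk => lt_of_lt_of_le hL (hρL k hk)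
  -- G is finite along the iterates
  have hGfinZ : ∀ k : ℤ, 1 ≤ k → G (x k) ≠ ⊤ := by
    intro k hk
    have h0 : (0:ℤ) ≤ k - 1 := by omega
    have := G_finite ψ ψ' G hGproper hGnobot (F' (y (k-1))) (1 / γ (k-1)) (y (k-1)) (x k)
      (by
        have hm := hxmin (k-1) h0
        have : k - 1 + 1 = k := by omega
        rwa [this] at hm)
    exact this
  -- formula for y k
  have hy0 : y 0 = x 0 := by
    rw [hy 0 le_rfl, hz0, hainit.2, one_smul]; abel
  have hyform : ∀ k : ℤ, 1 ≤ k →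
      y k = x k + ((1 - a k) * (1 - a (k-1))) • (x (k-1) - x k) := by
    intro k hk
    have hzk : z k = x (k-1) + a (k-1) • (x k - x (k-1)) := by
      have := hzrec (k-1) (by omega)
      have e : k - 1 + 1 = k := by omega
      rwa [e] at this
    rw [hy k (by omega), hzk]
    module
  -- TSP bound on D(x k, y k)
  have hDyk : ∀ k : ℤ, 1 ≤ k → breg ψ ψ' (x k) (y k)
      ≤ ((1 - a k) ^ κ * (1 - a (k-1)) ^ κ) * breg ψ ψ' (x k) (x (k-1)) := by
    intro k hk
    have h1 := hab k (by omega)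
    have h2 := hab (k-1) (by omega)
    set b : ℝ := (1 - a k) * (1 - a (k-1)) with hb
    have hb0 : 0 ≤ b := mul_nonneg (by linarith [h1.2]) (by linarith [h2.2])
    have hb1 : b ≤ 1 := by nlinarith [h1.1, h1.2, h2.1, h2.2]
    have htsp := hTSP (x k) (x k) (x (k-1)) b hb0 hb1
    have e1 : (1 - b) • x k + b • x k = x k := by module
    have e2 : (1 - b) • x k + b • x (k-1) = y k := by
      rw [hyform k hk]; module
    rw [e1, e2] at htsp
    calc breg ψ ψ' (x k) (y k) ≤ b ^ κ * breg ψ ψ' (x k) (x (k-1)) := htsp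
      _ = ((1 - a k) ^ κ * (1 - a (k-1)) ^ κ) * breg ψ ψ' (x k) (x (k-1)) := by
          rw [hb, Real.mul_rpow (by linarith [h1.2]) (by linarith [h2.2])]
  -- the master inequality at step k
  have hmasterZ : ∀ k : ℤ, 0 ≤ k → ∀ u, G u ≠ ⊤ →
      F (x (k+1)) + (G (x (k+1))).toReal + (1 / γ k) * breg ψ ψ' u (x (k+1))
        + (1 / γ k - L) * breg ψ ψ' (x (k+1)) (y k)
      ≤ F u + (G u).toReal + (1 / γ k + L) * breg ψ ψ' u (y k) := by
    intro k hk u hufin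
    exact master_step L ψ F ψ' F' hψgrad hFgrad hsmad₁ hsmad₂ G hGnobot hGconv
      (1 / γ k) (hρpos k (by omega)) (y k) (x (k+1)) (hxmin k hk)
      (hGfinZ (k+1) (by omega)) u hufin
  -- key recursive inequality, k ≥ 1
  have hKeyZ : ∀ k : ℤ, 1 ≤ k →
      F (x (k+1)) + (G (x (k+1))).toReal + (1 / γ k) * breg ψ ψ' (x k) (x (k+1))
      ≤ F (x k) + (G (x k)).toReal
        + (1 - ν) * ((1 / γ (k-1)) * breg ψ ψ' (x (k-1)) (x k)) := by
    intro k hk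
    have hm := hmasterZ k (by omega) (x k) (hGfinZ k hk)
    have hd1 : 0 ≤ (1 / γ k - L) * breg ψ ψ' (x (k+1)) (y k) :=
      mul_nonneg (by linarith [hρL k (by omega)]) (hDnn _ _)
    have hchain : (1 / γ k + L) * breg ψ ψ' (x k) (y k)
        ≤ (1 - ν) * ((1 / γ (k-1)) * breg ψ ψ' (x (k-1)) (x k)) := by
      have h1 := hDyk k hk
      have h2 := hνcond k (by omega)
      have hρnn : 0 ≤ 1 / γ k + L := by linarith [hρpos k (by omega : (-1:ℤ) ≤ k)]
      have hDnn2 := hDnn (x k) (x (k-1))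
      calc (1 / γ k + L) * breg ψ ψ' (x k) (y k)
          ≤ (1 / γ k + L) * (((1 - a k) ^ κ * (1 - a (k-1)) ^ κ) * breg ψ ψ' (x k) (x (k-1))) :=
            mul_le_mul_of_nonneg_left h1 hρnn
        _ = ((L + 1 / γ k) * ((1 - a k) ^ κ * (1 - a (k-1)) ^ κ)) * breg ψ ψ' (x k) (x (k-1)) := by
            ring
        _ ≤ ((1 - ν) / γ (k-1)) * breg ψ ψ' (x k) (x (k-1)) :=
            mul_le_mul_of_nonneg_right h2 hDnn2
        _ = (1 - ν) * ((1 / γ (k-1)) * breg ψ ψ' (x (k-1)) (x k)) := by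
            rw [hsym (x k) (x (k-1))]; ring
    linarith [hm, hd1, hchain]
  -- step 0
  have hKey0 : G (x 0) ≠ ⊤ →
      F (x 1) + (G (x 1)).toReal + (1 / γ 0) * breg ψ ψ' (x 0) (x 1)
        ≤ F (x 0) + (G (x 0)).toReal := by
    intro hfin
    have hm := hmasterZ 0 le_rfl (x 0) hfin
    rw [hy0] at hm
    have hself : breg ψ ψ' (x 0) (x 0) = 0 := by unfold breg; simp
    rw [hself] at hm
    have hd1 : 0 ≤ (1 / γ 0 - L) * breg ψ ψ' (x 1) (x 0) :=
      mul_nonneg (by linarith [hρL 0 (by omega)]) (hDnn _ _)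
    have e : (0:ℤ) + 1 = 1 := by omega
    rw [e] at hm
    linarith [hm, hd1]
  -- infimum setup
  obtain ⟨u₀, hu₀⟩ := hGproper
  obtain ⟨m, hm⟩ := hbdd
  set ι : EReal := ⨅ u, ((F u : EReal) + G u) with hι
  have hιlow : (m : EReal) ≤ ι := le_iInf hm
  have hιtop : ι ≠ ⊤ := by
    obtain ⟨g₀, hg₀⟩ : ∃ g₀ : ℝ, G u₀ = (g₀ : EReal) :=
      ⟨(G u₀).toReal, (EReal.coe_toReal hu₀ (hGnobot u₀)).symm⟩
    have h1 : ι ≤ ((F u₀ + g₀ : ℝ) : EReal) := by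
      refine le_trans (iInf_le _ u₀) ?_
      rw [hg₀, EReal.coe_add]
    intro h
    rw [h] at h1
    exact (EReal.coe_lt_top _).not_ge (by exact_mod_cast h1)
  have hιbot : ι ≠ ⊥ := by
    intro h
    rw [h] at hιlow
    exact (EReal.bot_lt_coe m).not_ge hιlow
  set Φstar : ℝ := ι.toReal with hΦstardef
  have hιeq : ι = (Φstar : EReal) := (EReal.coe_toReal hιtop hιbot).symm
  have hΦstarle : ∀ v, G v ≠ ⊤ → Φstar ≤ F v + (G v).toReal := by
    intro v hv
    obtain ⟨gv, hgv⟩ : ∃ gv : ℝ, G v = (gv : EReal) :=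
      ⟨(G v).toReal, (EReal.coe_toReal hv (hGnobot v)).symm⟩
    have h1 : ι ≤ ((F v + gv : ℝ) : EReal) := by
      refine le_trans (iInf_le _ v) ?_
      rw [hgv, EReal.coe_add]
    rw [hιeq, EReal.coe_le_coe_iff] at h1
    rw [hgv, EReal.toReal_coe]
    exact h1
  -- ℕ-indexed sequences
  set E : ℕ → ℝ := fun j => (1 / γ (j : ℤ)) * breg ψ ψ' (x (j : ℤ)) (x ((j : ℤ) + 1)) with hE
  set Φr : ℕ → ℝ := fun j => F (x (j : ℤ)) + (G (x (j : ℤ))).toReal with hΦr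
  have hEnn : ∀ j : ℕ, 0 ≤ E j := by
    intro j
    exact mul_nonneg (hρpos (j : ℤ) (by omega)).le (hDnn _ _)
  have hkeyN : ∀ j : ℕ, Φr (j + 2) + E (j + 1) ≤ Φr (j + 1) + (1 - ν) * E j := by
    intro j
    have hk := hKeyZ ((j : ℤ) + 1) (by omega)
    have e1 : ((j + 2 : ℕ) : ℤ) = ((j : ℤ) + 1) + 1 := by push_cast; ring
    have e2 : ((j + 1 : ℕ) : ℤ) = (j : ℤ) + 1 := by push_cast; ring
    have e3 : (j : ℤ) + 1 - 1 = (j : ℤ) := by ring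
    simp only [e3] at hk
    simp only [hE, hΦr, e1, e2]
    exact hk
  have hΦrge : ∀ j : ℕ, 1 ≤ j → Φstar ≤ Φr j := by
    intro j hj
    exact hΦstarle _ (hGfinZ (j : ℤ) (by omega))
  have hSbound := telescope_bound ν Φr E hEnn Φstar hΦrge hkeyN
  have hSnn : ∀ K : ℕ, 0 ≤ ∑ j ∈ Finset.range K, E j :=
    fun K => Finset.sum_nonneg fun j _ => hEnn j
  have hCnn : 0 ≤ Φr 1 + E 0 - Φstar := by
    have := hSbound 0
    simp at this
    nlinarith [hν0]
  -- summability
  have hterm : ∀ j : ℕ, ‖x ((j+1 : ℕ) : ℤ) - x (((j+1 : ℕ) : ℤ) - 1)‖ ^ 2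
      ≤ 2 / (σψ * L) * E j := by
    intro j
    have hcast1 : ((j + 1 : ℕ) : ℤ) = (j : ℤ) + 1 := by push_cast; ring
    have hcast2 : ((j + 1 : ℕ) : ℤ) - 1 = (j : ℤ) := by push_cast; ring
    rw [hcast2, hcast1]
    have h1 : σψ / 2 * ‖x ((j:ℤ)) - x ((j:ℤ) + 1)‖ ^ 2
        ≤ breg ψ ψ' (x (j:ℤ)) (x ((j:ℤ) + 1)) := hDlow _ _
    have h2 : L * breg ψ ψ' (x (j:ℤ)) (x ((j:ℤ) + 1)) ≤ E j := by
      simp only [hE]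
      exact mul_le_mul_of_nonneg_right (hρL (j:ℤ) (by omega)) (hDnn _ _)
    have h3 : ‖x ((j:ℤ) + 1) - x (j:ℤ)‖ = ‖x (j:ℤ) - x ((j:ℤ) + 1)‖ := norm_sub_rev _ _
    rw [h3]
    rw [div_mul_eq_mul_div, le_div_iff₀ (by positivity)]
    nlinarith [hDnn (x (j:ℤ)) (x ((j:ℤ) + 1))]
  have hsummable : Summable (fun k : ℕ => ‖x (k : ℤ) - x ((k : ℤ) - 1)‖ ^ 2) := by
    apply summable_of_sum_range_le (c := ‖x ((0:ℕ) : ℤ) - x (((0:ℕ):ℤ) - 1)‖ ^ 2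
      + 2 / (σψ * L) * ((Φr 1 + E 0 - Φstar) / ν))
    · intro j; positivity
    · intro K
      cases K with
      | zero =>
        simp only [Finset.range_zero, Finset.sum_empty]
        positivity
      | succ M =>
        rw [Finset.sum_range_succ']
        have h1 : ∑ i ∈ Finset.range M, ‖x ((i+1 : ℕ) : ℤ) - x (((i+1 : ℕ) : ℤ) - 1)‖ ^ 2
            ≤ 2 / (σψ * L) * ∑ i ∈ Finset.range M, E i := by
          rw [Finset.mul_sum]
          exact Finset.sum_le_sum fun i _ => hterm i
        have h2 : ∑ i ∈ Finset.range M, E i ≤ (Φr 1 + E 0 - Φstar) / ν := by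
          rw [le_div_iff₀ hν0]
          linarith [hSbound M]
        have h3 : (0:ℝ) ≤ 2 / (σψ * L) := by positivity
        have h4 := mul_le_mul_of_nonneg_left h2 h3
        linarith [h1, h4]
  refine ⟨hsummable, ?_⟩
  -- part 2
  intro k
  obtain ⟨i, himem, himin⟩ := Finset.exists_min_image (Finset.range (k+1))
    (fun j : ℕ => ‖x (j : ℤ) - x ((j : ℤ) - 1)‖ ^ 2) ⟨0, Finset.mem_range.2 (by omega)⟩
  have hik : i ≤ k := by
    have := Finset.mem_range.1 himem; omega
  refine ⟨i, hik, ?_⟩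
  set val : ℝ := ‖x (i : ℤ) - x ((i : ℤ) - 1)‖ ^ 2 with hval
  by_cases hG0 : G (x 0) = ⊤
  · -- RHS is ⊤
    have hRHS : (F (x 0) : EReal) + G (x 0) + ((L * breg ψ ψ' (x 0) (x (-1)) : ℝ) : EReal)
        - ι = ⊤ := by
      rw [hG0, EReal.coe_add_top, EReal.top_add_coe, hιeq, EReal.top_sub_coe]
    rw [hRHS]
    exact le_top
  · -- real case
    obtain ⟨g₀, hg₀⟩ : ∃ g₀ : ℝ, G (x 0) = (g₀ : EReal) :=
      ⟨(G (x 0)).toReal, (EReal.coe_toReal hG0 (hGnobot _)).symm⟩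
    have hΦr0 : Φr 0 = F (x 0) + g₀ := by
      simp only [hΦr]
      rw [Nat.cast_zero, hg₀, EReal.toReal_coe]
    have hstep0 : Φr 1 + E 0 ≤ Φr 0 := by
      have h := hKey0 hG0
      simp only [hE, hΦr, Nat.cast_one, Nat.cast_zero, zero_add]
      exact h
    have hνS : ∀ K : ℕ, ν * (∑ j ∈ Finset.range K, E j) ≤ Φr 0 - Φstar := by
      intro K
      linarith [hSbound K]
    -- termwise bound of the sum
    have hterm2 : ∀ j : ℕ, σψ * ν * L / 2 * ‖x ((j+1 : ℕ) : ℤ) - x (((j+1 : ℕ) : ℤ) - 1)‖ ^ 2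
        ≤ ν * E j := by
      intro j
      have hcast1 : ((j + 1 : ℕ) : ℤ) = (j : ℤ) + 1 := by push_cast; ring
      have hcast2 : ((j + 1 : ℕ) : ℤ) - 1 = (j : ℤ) := by push_cast; ring
      rw [hcast2, hcast1]
      have h1 : σψ / 2 * ‖x ((j:ℤ)) - x ((j:ℤ) + 1)‖ ^ 2
          ≤ breg ψ ψ' (x (j:ℤ)) (x ((j:ℤ) + 1)) := hDlow _ _
      have h2 : L * breg ψ ψ' (x (j:ℤ)) (x ((j:ℤ) + 1)) ≤ E j := by
        simp only [hE]
        exact mul_le_mul_of_nonneg_right (hρL (j:ℤ) (by omega)) (hDnn _ _)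
      have h3 : ‖x ((j:ℤ) + 1) - x (j:ℤ)‖ = ‖x (j:ℤ) - x ((j:ℤ) + 1)‖ := norm_sub_rev _ _
      rw [h3]
      calc σψ * ν * L / 2 * ‖x (j:ℤ) - x ((j:ℤ) + 1)‖ ^ 2
          = ν * (L * (σψ / 2 * ‖x (j:ℤ) - x ((j:ℤ) + 1)‖ ^ 2)) := by ring
        _ ≤ ν * (L * breg ψ ψ' (x (j:ℤ)) (x ((j:ℤ) + 1))) :=
            mul_le_mul_of_nonneg_left (mul_le_mul_of_nonneg_left h1 hL.le) hν0.le
        _ ≤ ν * E j := mul_le_mul_of_nonneg_left h2 hν0.le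
    have hterm0 : σψ * ν * L / 2 * ‖x ((0:ℕ) : ℤ) - x (((0:ℕ):ℤ) - 1)‖ ^ 2
        ≤ L * breg ψ ψ' (x 0) (x (-1)) := by
      have ec : (((0:ℕ):ℤ) - 1) = (-1 : ℤ) := by norm_num
      rw [ec, Nat.cast_zero]
      have h1 : σψ / 2 * ‖x (0:ℤ) - x (-1)‖ ^ 2 ≤ breg ψ ψ' (x (0:ℤ)) (x (-1)) :=
        hDlow (x (0:ℤ)) (x (-1))
      calc σψ * ν * L / 2 * ‖x (0:ℤ) - x (-1)‖ ^ 2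
          = L * (ν * (σψ / 2 * ‖x (0:ℤ) - x (-1)‖ ^ 2)) := by ring
        _ ≤ L * (ν * breg ψ ψ' (x (0:ℤ)) (x (-1))) :=
            mul_le_mul_of_nonneg_left (mul_le_mul_of_nonneg_left h1 hν0.le) hL.le
        _ ≤ L * (1 * breg ψ ψ' (x (0:ℤ)) (x (-1))) :=
            mul_le_mul_of_nonneg_left (mul_le_mul_of_nonneg_right hν1 (hDnn _ _)) hL.le
        _ = L * breg ψ ψ' (x (0:ℤ)) (x (-1)) := by ring
    -- sum bound
    have hsum : ∑ j ∈ Finset.range (k+1), σψ * ν * L / 2 * ‖x (j : ℤ) - x ((j : ℤ) - 1)‖ ^ 2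
        ≤ L * breg ψ ψ' (x 0) (x (-1)) + (Φr 0 - Φstar) := by
      rw [Finset.sum_range_succ']
      have h1 : ∑ i ∈ Finset.range k, σψ * ν * L / 2 * ‖x ((i+1 : ℕ) : ℤ) - x (((i+1 : ℕ) : ℤ) - 1)‖ ^ 2
          ≤ ν * ∑ i ∈ Finset.range k, E i := by
        rw [Finset.mul_sum]
        exact Finset.sum_le_sum fun i _ => hterm2 i
      calc ∑ i ∈ Finset.range k, σψ * ν * L / 2 * ‖x ((i+1 : ℕ) : ℤ) - x (((i+1 : ℕ) : ℤ) - 1)‖ ^ 2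
            + σψ * ν * L / 2 * ‖x ((0:ℕ) : ℤ) - x (((0:ℕ):ℤ) - 1)‖ ^ 2
          ≤ (ν * ∑ i ∈ Finset.range k, E i) + L * breg ψ ψ' (x 0) (x (-1)) :=
            add_le_add h1 hterm0
        _ ≤ (Φr 0 - Φstar) + L * breg ψ ψ' (x 0) (x (-1)) :=
            add_le_add_left (hνS k) _
        _ = L * breg ψ ψ' (x 0) (x (-1)) + (Φr 0 - Φstar) := by ring
    -- min times count
    have hmin2 : (k+1 : ℝ) * (σψ * ν * L / 2 * val) ≤
        ∑ j ∈ Finset.range (k+1), σψ * ν * L / 2 * ‖x (j : ℤ) - x ((j : ℤ) - 1)‖ ^ 2 := by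
      have hcard := Finset.card_nsmul_le_sum (Finset.range (k+1))
        (fun j : ℕ => σψ * ν * L / 2 * ‖x (j : ℤ) - x ((j : ℤ) - 1)‖ ^ 2)
        (σψ * ν * L / 2 * val) ?_
      · rw [Finset.card_range] at hcard
        have : ((k+1 : ℕ) : ℝ) = (k : ℝ) + 1 := by push_cast; ring
        rw [nsmul_eq_mul, this] at hcard
        linarith [hcard]
      · intro j hj
        have := himin j hj
        have hc : 0 ≤ σψ * ν * L / 2 := by positivity
        exact mul_le_mul_of_nonneg_left this hc
    -- conclude
    have hreal : σψ * ν * L * ((k : ℝ) + 1) / 2 * val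
        ≤ F (x 0) + g₀ + L * breg ψ ψ' (x 0) (x (-1)) - Φstar := by
      rw [hΦr0] at hsum
      have e : σψ * ν * L * ((k : ℝ) + 1) / 2 * val = (k+1 : ℝ) * (σψ * ν * L / 2 * val) := by
        ring
      rw [e]
      linarith [hmin2, hsum]
    rw [hιeq, hg₀]
    have hRHS : (F (x 0) : EReal) + (g₀ : EReal) + ((L * breg ψ ψ' (x 0) (x (-1)) : ℝ) : EReal)
        - (Φstar : EReal)
        = ((F (x 0) + g₀ + L * breg ψ ψ' (x 0) (x (-1)) - Φstar : ℝ) : EReal) := by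
      rw [← EReal.coe_add, ← EReal.coe_add, ← EReal.coe_sub]
    rw [hRHS]
    rw [EReal.coe_le_coe_iff]
    exact hreal
end

section
/- Let A be a real n×n matrix, let a ∈ (0,1), set b := 2a − a² and c := (1 − a)², and let M be the 2n×2n block matrix M = [[b·A, c·A], [I, 0]]. If (r₁, r₂) ∈ ℝⁿ × ℝⁿ is a nonzero eigenvector of M associated with an eigenvalue ϱ, then r₁ = ϱ·r₂, r₂ ≠ 0, and r₂ is an eigenvector of A associated with an eigenvalue η that satisfies ϱ² − b·ϱ·η − c·η = 0. -/
/-- structure of the eigenvectors/eigenvalues of the inertial iteration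
matrix `M = [[b·A, c·A], [I, 0]]` with `b = 2a − a²`, `c = (1 − a)²`. -/
theorem stmt10 {n : ℕ} (A : Matrix (Fin n) (Fin n) ℝ)
    (a : ℝ) (ha0 : 0 < a) (ha1 : a < 1)
    (b c : ℝ) (hb : b = 2 * a - a ^ 2) (hc : c = (1 - a) ^ 2)
    (M : Matrix (Fin n ⊕ Fin n) (Fin n ⊕ Fin n) ℝ)
    (hM : M = Matrix.fromBlocks (b • A) (c • A) 1 0)
    (r₁ r₂ : Fin n → ℝ) (ϱ : ℝ)
    (hnz : Sum.elim r₁ r₂ ≠ 0)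
    (heig : M.mulVec (Sum.elim r₁ r₂) = ϱ • Sum.elim r₁ r₂) :
    r₁ = ϱ • r₂ ∧ r₂ ≠ 0 ∧
    ∃ η : ℝ, A.mulVec r₂ = η • r₂ ∧ ϱ ^ 2 - b * ϱ * η - c * η = 0 := by
  subst hM
  rw [Matrix.fromBlocks_mulVec] at heig
  simp only [Matrix.one_mulVec, Matrix.zero_mulVec, add_zero] at heig
  have h2 : r₁ = ϱ • r₂ := by
    funext i
    have h := congrFun heig (Sum.inr i)
    simpa using h
  have h1 : b • A.mulVec r₁ + c • A.mulVec r₂ = ϱ • r₁ := by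
    funext i
    have h := congrFun heig (Sum.inl i)
    simpa [Matrix.smul_mulVec] using h
  have hr2 : r₂ ≠ 0 := by
    intro h
    apply hnz
    funext j
    cases j with
    | inl i => simp [h2, h]
    | inr i => simp [h]
  have key : (b * ϱ + c) • A.mulVec r₂ = (ϱ ^ 2) • r₂ := by
    rw [h2, Matrix.mulVec_smul] at h1
    rw [add_smul, mul_smul, h1, smul_smul, ← pow_two]
  have hs0 : b * ϱ + c ≠ 0 := by
    intro h0
    rw [h0, zero_smul] at key
    have hϱ : ϱ = 0 := by
      rcases smul_eq_zero.mp key.symm with h | h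
      · exact pow_eq_zero_iff (by norm_num) |>.mp h
      · exact absurd h hr2
    have hcpos : 0 < (1 - a) ^ 2 := pow_pos (by linarith) 2
    rw [hϱ, mul_zero, zero_add, hc] at h0
    linarith
  refine ⟨h2, hr2, ϱ ^ 2 / (b * ϱ + c), ?_, ?_⟩
  · have := congrArg (fun v => (b * ϱ + c)⁻¹ • v) key
    simpa [inv_smul_smul₀ hs0, smul_smul, div_eq_inv_mul] using this
  · field_simp
    have hinv : (ϱ * b + c) * (ϱ * b + c)⁻¹ = 1 := mul_inv_cancel₀ (by rwa [mul_comm ϱ b])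
    linear_combination (-ϱ ^ 2) * hinv
end

section
/- Let S be a real symmetric n×n matrix having an eigenvalue η > 1, let a ∈ (0, 1], set b := 2a − a² and c := (1 − a)², and let M be the 2n×2n block matrix M = [[b·S, c·S], [I, 0]]. Then M has a real eigenvalue ϱ > 1. (Indeed, if v is an eigenvector of S for η and ϱ > 1 is the positive root of ϱ² − b·η·ϱ − c·η = 0, then (ϱ·v, v) is an eigenvector of M for ϱ.) -/
/-!
`b + c = 1` for every `a`, so the quadratic `x ^ 2 - bη x - cη` is `1 - η < 0` at `x = 1` and its
larger root `ϱ` exceeds `1`. Stacking `ϱ v` over an `η`-eigenvector `v` of `S` gives an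
eigenvector of `M` for `ϱ`: the lower block row returns `ϱ v`, the upper one
`(bηϱ + cη) v = ϱ² v`.
-/

lemma exists_one_lt_sq_sub_mul_sub_eq_zero {p q : ℝ} (hpq : 1 < p + q) :
    ∃ r : ℝ, 1 < r ∧ r ^ 2 - p * r - q = 0 := by
  have hdisc : 0 ≤ p ^ 2 + 4 * q := by nlinarith [sq_nonneg (p - 2)]
  have hsq := Real.sq_sqrt hdisc
  have hsqrt := Real.sqrt_nonneg (p ^ 2 + 4 * q)
  refine ⟨(p + √(p ^ 2 + 4 * q)) / 2, ?_, by linear_combination hsq / 4⟩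
  -- `√(p² + 4q) > 2 - p` since `p² + 4q > (2 - p)²`
  nlinarith [sq_nonneg (√(p ^ 2 + 4 * q) + 2 - p)]

namespace Matrix

variable {R ι : Type*} [CommRing R] [Fintype ι] [DecidableEq ι]

lemma fromBlocks_smul_smul_one_zero_mulVec_sum_elim {S : Matrix ι ι R} {b c η ϱ : R}
    {v : ι → R} (hSv : S *ᵥ v = η • v) (hϱ : ϱ ^ 2 - b * η * ϱ - c * η = 0) :
    fromBlocks (b • S) (c • S) 1 0 *ᵥ Sum.elim (ϱ • v) v = ϱ • Sum.elim (ϱ • v) v := by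
  rw [fromBlocks_mulVec]
  ext (i | i)
  · simp only [Sum.elim_comp_inl, Sum.elim_comp_inr, Sum.elim_inl, Pi.add_apply, smul_mulVec,
      mulVec_smul, hSv, Pi.smul_apply, smul_eq_mul]
    linear_combination (-v i) * hϱ
  · simp

end Matrix

lemma Sum.elim_ne_zero_of_right_ne_zero {α β M : Type*} [Zero M] {f : α → M} {g : β → M}
    (hg : g ≠ 0) : Sum.elim f g ≠ 0 :=
  fun h ↦ hg (funext fun i ↦ congrFun h (Sum.inr i))

theorem stmt15_general {n : ℕ} (S : Matrix (Fin n) (Fin n) ℝ)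
    (η : ℝ) (hη : 1 < η)
    (v : Fin n → ℝ) (hv : v ≠ 0) (hSv : S.mulVec v = η • v)
    (a : ℝ)
    (b c : ℝ) (hb : b = 2 * a - a ^ 2) (hc : c = (1 - a) ^ 2)
    (M : Matrix (Fin n ⊕ Fin n) (Fin n ⊕ Fin n) ℝ)
    (hM : M = Matrix.fromBlocks (b • S) (c • S) 1 0) :
    ∃ ϱ : ℝ, 1 < ϱ ∧ ϱ ^ 2 - b * η * ϱ - c * η = 0 ∧
      ∃ w : Fin n ⊕ Fin n → ℝ, w ≠ 0 ∧ M.mulVec w = ϱ • w := by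
  have hbc : b + c = 1 := by rw [hb, hc]; ring
  obtain ⟨ϱ, hϱ1, hϱ⟩ := exists_one_lt_sq_sub_mul_sub_eq_zero (p := b * η) (q := c * η)
    (by rwa [← add_mul, hbc, one_mul])
  refine ⟨ϱ, hϱ1, hϱ, Sum.elim (ϱ • v) v, Sum.elim_ne_zero_of_right_ne_zero hv, ?_⟩
  rw [hM]
  exact Matrix.fromBlocks_smul_smul_one_zero_mulVec_sum_elim hSv hϱ

/-- if the symmetric matrix `S` has an eigenvalue `η > 1`, then the
inertial iteration matrix `M = [[b·S, c·S], [I, 0]]` has a real eigenvalue `ϱ > 1`. -/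
theorem stmt15 {n : ℕ} (S : Matrix (Fin n) (Fin n) ℝ) (hSsymm : S.IsSymm)
    (η : ℝ) (hη : 1 < η)
    (v : Fin n → ℝ) (hv : v ≠ 0) (hSv : S.mulVec v = η • v)
    (a : ℝ) (ha0 : 0 < a) (ha1 : a ≤ 1)
    (b c : ℝ) (hb : b = 2 * a - a ^ 2) (hc : c = (1 - a) ^ 2)
    (M : Matrix (Fin n ⊕ Fin n) (Fin n ⊕ Fin n) ℝ)
    (hM : M = Matrix.fromBlocks (b • S) (c • S) 1 0) :
    ∃ ϱ : ℝ, 1 < ϱ ∧ ϱ ^ 2 - b * η * ϱ - c * η = 0 ∧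
      ∃ w : Fin n ⊕ Fin n → ℝ, w ≠ 0 ∧ M.mulVec w = ϱ • w :=
  stmt15_general S η hη v hv hSv a b c hb hc M hM
end

section
/- Let φ : ℝⁿ → ℝ be differentiable, σ-strongly convex and L_φ-smooth, i.e., (σ/2)‖x − y‖² ≤ D_φ(x, y) ≤ (L_φ/2)‖x − y‖² for all x, y, with 0 < σ ≤ L_φ. Then for all x, y, z ∈ ℝⁿ and all a ∈ [0,1]: D_φ((1 − a)x + a·y, (1 − a)x + a·z) ≤ (L_φ/σ)·a²·D_φ(y, z). That is, the triangle scaling inequality with exponent κ = 2 holds with the additional condition-number factor L_φ/σ on the right-hand side. -/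
open scoped RealInnerProductSpace

/-- a strongly convex and smooth kernel satisfies the triangle scaling
inequality with exponent 2 up to the condition number `L_φ/σ`. -/
theorem stmt18 {n : ℕ} (σ Lφ : ℝ) (hσ : 0 < σ) (hσL : σ ≤ Lφ)
    (φ : EuclideanSpace ℝ (Fin n) → ℝ)
    (φ' : EuclideanSpace ℝ (Fin n) → EuclideanSpace ℝ (Fin n))
    (hφgrad : ∀ u, HasGradientAt φ (φ' u) u)
    (hlow : ∀ x y : EuclideanSpace ℝ (Fin n), σ / 2 * ‖x - y‖ ^ 2 ≤ breg φ φ' x y)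
    (hupp : ∀ x y : EuclideanSpace ℝ (Fin n), breg φ φ' x y ≤ Lφ / 2 * ‖x - y‖ ^ 2) :
    ∀ x y z : EuclideanSpace ℝ (Fin n), ∀ a : ℝ, 0 ≤ a → a ≤ 1 →
      breg φ φ' ((1 - a) • x + a • y) ((1 - a) • x + a • z)
        ≤ Lφ / σ * a ^ 2 * breg φ φ' y z := by
  intro x y z a ha ha1
  have hdiff : ((1 - a) • x + a • y) - ((1 - a) • x + a • z) = a • (y - z) := by
    module
  have h1 := hupp ((1 - a) • x + a • y) ((1 - a) • x + a • z)
  rw [hdiff, norm_smul] at h1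
  have h2 := hlow y z
  have hL : 0 < Lφ := lt_of_lt_of_le hσ hσL
  calc breg φ φ' ((1 - a) • x + a • y) ((1 - a) • x + a • z)
      ≤ Lφ / 2 * (‖a‖ * ‖y - z‖) ^ 2 := h1
    _ = Lφ / σ * a ^ 2 * (σ / 2 * ‖y - z‖ ^ 2) := by
        rw [Real.norm_eq_abs, mul_pow, sq_abs]; field_simp
    _ ≤ Lφ / σ * a ^ 2 * breg φ φ' y z := by
        apply mul_le_mul_of_nonneg_left h2
        positivity
end
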